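/- arXiv:1302.3737 — 4 statements merged into one kernel-verified Lean document; each statement's English description precedes it below -/
import Mathlib

section
/- Let d ≥ 1 and let p₁ ≠ p₂ be two distinct points of ℝᵈ. Then for every homeomorphism f in Homeo₀(ℝᵈ) there exist homeomorphisms f₁, f₃ in G_{p₁}^d and f₂ in G_{p₂}^d such that f = f₁ ∘ f₂ ∘ f₃. -/
/-- The group of homeomorphisms of a topological space, with composition as
multiplication: `(f * g) x = f (g x)`. -/
instance homeoGroup {X : Type*} [TopologicalSpace X] : Group (X ≃ₜ X) where
  mul f g := g.trans f
  one := Homeomorph.refl X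
  inv := Homeomorph.symm
  mul_assoc _ _ _ := rfl
  one_mul f := Homeomorph.ext fun _ => rfl
  mul_one f := Homeomorph.ext fun _ => rfl
  inv_mul_cancel f := Homeomorph.ext fun x => f.symm_apply_apply x

/-- `f` is isotopic to the identity through a compactly supported isotopy: there is a
level-preserving homeomorphism `H` of `X × [0,1]` (so each time slice `H (·, t)` is a
homeomorphism of `X`, varying continuously in `t`), supported in a fixed compact set `K`,
which is the identity at time `0` and equals `f` at time `1`. -/
def IsotopicToIdC {X : Type*} [TopologicalSpace X] (f : X ≃ₜ X) : Prop :=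
  ∃ H : (X × unitInterval) ≃ₜ (X × unitInterval), ∃ K : Set X, IsCompact K ∧
    (∀ p : X × unitInterval, (H p).2 = p.2) ∧
    (∀ x : X, H (x, 0) = (x, 0)) ∧
    (∀ x : X, H (x, 1) = (f x, 1)) ∧
    (∀ t : unitInterval, ∀ x ∉ K, H (x, t) = (x, t))

/-- `Homeo0 X`: the group of compactly supported homeomorphisms of `X` which are
isotopic to the identity through a compactly supported isotopy. -/
def Homeo0 (X : Type*) [TopologicalSpace X] : Subgroup (X ≃ₜ X) where
  carrier := {f | IsotopicToIdC f}
  one_mem' := ⟨Homeomorph.refl _, ∅, isCompact_empty, fun _ => rfl, fun _ => rfl,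
    fun _ => rfl, fun _ _ _ => rfl⟩
  mul_mem' := by
    rintro f g ⟨H₁, K₁, hK₁, hl₁, h0₁, h1₁, hs₁⟩ ⟨H₂, K₂, hK₂, hl₂, h0₂, h1₂, hs₂⟩
    refine ⟨H₂.trans H₁, K₁ ∪ K₂, hK₁.union hK₂, fun p => ?_, fun x => ?_, fun x => ?_,
      fun t x hx => ?_⟩
    · show (H₁ (H₂ p)).2 = p.2
      rw [hl₁, hl₂]
    · show H₁ (H₂ (x, 0)) = (x, 0)
      rw [h0₂, h0₁]
    · show H₁ (H₂ (x, 1)) = ((f * g) x, 1)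
      rw [h1₂, h1₁]
      rfl
    · show H₁ (H₂ (x, t)) = (x, t)
      rw [hs₂ t x fun h => hx (Or.inr h), hs₁ t x fun h => hx (Or.inl h)]
  inv_mem' := by
    rintro f ⟨H, K, hK, hl, h0, h1, hs⟩
    refine ⟨H.symm, K, hK, fun p => ?_, fun x => ?_, fun x => ?_, fun t x hx => ?_⟩
    · conv_rhs => rw [← H.apply_symm_apply p]
      rw [hl]
    · conv_lhs => rw [← h0 x]
      exact H.symm_apply_apply _
    · have : H ((f⁻¹ : X ≃ₜ X) x, 1) = (x, 1) := by
        rw [h1]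
        show (f (f.symm x), 1) = (x, 1)
        rw [f.apply_symm_apply]
      rw [← this, H.symm_apply_apply]
    · conv_lhs => rw [← hs t x hx]
      exact H.symm_apply_apply _

/-- The subgroup of `Homeo₀ X` consisting of homeomorphisms which pointwise fix a
neighbourhood of the set `S`. -/
def fixingNbhd {X : Type*} [TopologicalSpace X] (S : Set X) : Subgroup (Homeo0 X) where
  carrier := {f | ∃ U : Set X, IsOpen U ∧ S ⊆ U ∧ ∀ x ∈ U, (f : X ≃ₜ X) x = x}
  one_mem' := ⟨Set.univ, isOpen_univ, Set.subset_univ _, fun _ _ => rfl⟩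
  mul_mem' := by
    rintro f g ⟨U, hU, hSU, hf⟩ ⟨V, hV, hSV, hg⟩
    refine ⟨U ∩ V, hU.inter hV, Set.subset_inter hSU hSV, fun x hx => ?_⟩
    show (f : X ≃ₜ X) ((g : X ≃ₜ X) x) = x
    rw [hg x hx.2, hf x hx.1]
  inv_mem' := by
    rintro f ⟨U, hU, hSU, hf⟩
    refine ⟨U, hU, hSU, fun x hx => ?_⟩
    show ((f : X ≃ₜ X)).symm x = x
    conv_lhs => rw [← hf x hx]
    exact (f : X ≃ₜ X).symm_apply_apply x


/-!
Pick `h` fixing a neighbourhood of `p₁` that sends `p₂` outside a compact set `K` off which `f`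
is the identity. Then `h⁻¹ f h` fixes a neighbourhood of `p₂`, and `f = h (h⁻¹ f h) h⁻¹`.

Such an `h` is a composite of pushes `x ↦ x + max 0 (r - ‖x - q‖) • v` with `‖v‖ < 1`. A push is a
contraction perturbation of the identity, hence bijective, and scaling `v` down to `0` gives a
compactly supported isotopy to the identity. With `D = ‖q - p₁‖` and `r = D / 2`, a push along
`q - p₁` fixes the ball of radius `D / 2` about `p₁` and multiplies the distance from `q` to `p₁`
by `5 / 4`; iterating sends `q` arbitrarily far.
-/

open Function Metric Set
open scoped NNReal

theorem LipschitzWith.bijective_add_self {E : Type*} [NormedAddCommGroup E] [CompleteSpace E]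
    {K : ℝ≥0} {g : E → E} (hg : LipschitzWith K g) (hK : K < 1) :
    Bijective fun x => x + g x := by
  refine ⟨(AntilipschitzWith.id.add_lipschitzWith hg (by simpa using hK)).injective, fun z => ?_⟩
  have hcontr : ContractingWith K fun x => z - g x :=
    ⟨hK, by simpa using (LipschitzWith.const z).sub hg⟩
  exact ⟨_, (sub_eq_iff_eq_add.1 hcontr.fixedPoint_isFixedPt).symm⟩

section CompactSupport

variable {X : Type*} [TopologicalSpace X] [T2Space X] [WeaklyLocallyCompactSpace X]

theorem isProperMap_of_eq_self_off_isCompact {g : X → X} (hg : Continuous g) {K : Set X}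
    (hK : IsCompact K) (hgK : ∀ x ∉ K, g x = x) : IsProperMap g := by
  refine isProperMap_iff_isCompact_preimage.2 ⟨hg, fun C hC => ?_⟩
  refine (hC.union hK).of_isClosed_subset (hC.isClosed.preimage hg) fun x hx => ?_
  by_cases hxK : x ∈ K
  · exact Or.inr hxK
  · exact Or.inl (hgK x hxK ▸ hx)

theorem isHomeomorph_of_eq_self_off_isCompact {g : X → X} (hg : Continuous g)
    (hbij : Bijective g) {K : Set X} (hK : IsCompact K) (hgK : ∀ x ∉ K, g x = x) :
    IsHomeomorph g :=
  isHomeomorph_iff_continuous_isClosedMap_bijective.2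
    ⟨hg, (isProperMap_of_eq_self_off_isCompact hg hK hgK).isClosedMap, hbij⟩

theorem exists_coe_Homeo0_eq_of_isotopy (F : unitInterval → X → X)
    (hF : Continuous fun p : X × unitInterval => F p.2 p.1) (hbij : ∀ t, Bijective (F t))
    (h0 : ∀ x, F 0 x = x) {K : Set X} (hK : IsCompact K) (hFK : ∀ t, ∀ x ∉ K, F t x = x) :
    ∃ f : Homeo0 X, ⇑(f : X ≃ₜ X) = F 1 := by
  set H : X × unitInterval → X × unitInterval := fun p => (F p.2 p.1, p.2)
  have hH : IsHomeomorph H := by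
    refine isHomeomorph_of_eq_self_off_isCompact (hF.prodMk continuous_snd) ?_
      (hK.prod isCompact_univ) ?_
    · refine ⟨fun ⟨x, t⟩ ⟨y, s⟩ hxy => ?_, fun ⟨z, t⟩ => ?_⟩
      · obtain ⟨hxy, rfl : t = s⟩ := Prod.mk.inj hxy
        exact congrArg (·, t) ((hbij t).injective hxy)
      · obtain ⟨x, rfl⟩ := (hbij t).surjective z
        exact ⟨(x, t), rfl⟩
    · rintro ⟨x, t⟩ hx
      simp only [mem_prod, mem_univ, and_true] at hx
      simp [H, hFK t x hx]
  have hF1 : IsHomeomorph (F 1) :=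
    isHomeomorph_of_eq_self_off_isCompact (hF.comp (continuous_id.prodMk continuous_const))
      (hbij 1) hK (hFK 1)
  refine ⟨⟨hF1.homeomorph, hH.homeomorph, K, hK, fun _ => rfl, fun x => ?_, fun x => rfl,
    fun t x hx => ?_⟩, rfl⟩
  · simp [H, h0]
  · simp [H, hFK t x hx]

end CompactSupport

theorem IsotopicToIdC.exists_isCompact_apply_eq_self {X : Type*} [TopologicalSpace X]
    {f : X ≃ₜ X} (hf : IsotopicToIdC f) : ∃ K : Set X, IsCompact K ∧ ∀ x ∉ K, f x = x := by
  obtain ⟨_, K, hK, -, -, h1, hK'⟩ := hf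
  exact ⟨K, hK, fun x hx => congrArg Prod.fst ((h1 x).symm.trans (hK' 1 x hx))⟩

theorem conj_mem_fixingNbhd {X : Type*} [TopologicalSpace X] {f h : Homeo0 X} {U S : Set X}
    (hU : IsOpen U) (hfU : ∀ x ∈ U, (f : X ≃ₜ X) x = x) (hS : MapsTo (h : X ≃ₜ X) S U) :
    h⁻¹ * f * h ∈ fixingNbhd S :=
  ⟨(h : X ≃ₜ X) ⁻¹' U, hU.preimage (h : X ≃ₜ X).continuous, hS.subset_preimage,
    fun x hx => by
      change (h : X ≃ₜ X).symm ((f : X ≃ₜ X) ((h : X ≃ₜ X) x)) = x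
      rw [hfU _ hx, Homeomorph.symm_apply_apply]⟩

section Push

variable {E : Type*} [NormedAddCommGroup E] [NormedSpace ℝ E]

def push (q : E) (r : ℝ) (v x : E) : E := x + max 0 (r - dist x q) • v

variable {q : E} {r : ℝ} {v : E}

theorem lipschitzWith_tent_smul :
    LipschitzWith ‖v‖₊ fun x => max 0 (r - dist x q) • v := by
  have htent : LipschitzWith 1 fun x => max 0 (r - dist x q) := by
    simpa using ((LipschitzWith.const r).sub (LipschitzWith.dist_left q)).const_max 0
  refine LipschitzWith.of_dist_le_mul fun x y => ?_
  rw [dist_eq_norm, ← sub_smul, norm_smul, ← dist_eq_norm, coe_nnnorm, mul_comm]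
  exact mul_le_mul_of_nonneg_left (by simpa using htent.dist_le_mul x y) (norm_nonneg v)

theorem push_bijective [CompleteSpace E] (hv : ‖v‖ < 1) : Bijective (push q r v) :=
  lipschitzWith_tent_smul.bijective_add_self (by exact_mod_cast hv)

theorem push_eq_self {x : E} (hx : r ≤ dist x q) : push q r v x = x := by
  simp [push, hx]

theorem push_self (hr : 0 ≤ r) : push q r v q = q + r • v := by
  simp [push, hr]

variable [ProperSpace E]

theorem exists_coe_Homeo0_eq_push (q : E) (r : ℝ) (hv : ‖v‖ < 1) :
    ∃ f : Homeo0 E, ⇑(f : E ≃ₜ E) = push q r v := by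
  have hv' (t : unitInterval) : ‖(t : ℝ) • v‖ < 1 :=
    calc ‖(t : ℝ) • v‖ ≤ ‖v‖ := by
          rw [norm_smul, Real.norm_of_nonneg t.2.1]
          exact mul_le_of_le_one_left (norm_nonneg v) t.2.2
      _ < 1 := hv
  simpa using exists_coe_Homeo0_eq_of_isotopy (fun t => push q r ((t : ℝ) • v))
    (by unfold push; fun_prop) (fun t => push_bijective (hv' t)) (fun x => by simp [push])
    (isCompact_closedBall q r) fun t x hx => push_eq_self (not_le.1 hx).le

theorem exists_mem_fixingNbhd_dist_eq {p q : E} (hq : q ≠ p) :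
    ∃ h ∈ fixingNbhd ({p} : Set E), dist ((h : E ≃ₜ E) q) p = 5 / 4 * dist q p := by
  set D := dist q p
  have hD : 0 < D := dist_pos.2 hq
  set v : E := (2 * D)⁻¹ • (q - p)
  have hv : ‖v‖ < 1 := by
    rw [norm_smul, ← dist_eq_norm, norm_inv, Real.norm_of_nonneg (by positivity)]
    field_simp
    linarith
  obtain ⟨h, hh⟩ := exists_coe_Homeo0_eq_push q (D / 2) hv
  refine ⟨h, ⟨ball p (D / 2), isOpen_ball, by simpa using half_pos hD, fun x hx => ?_⟩, ?_⟩
  · rw [hh, push_eq_self]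
    linarith [dist_triangle_left q p x, mem_ball.1 hx]
  · have : q + (D / 2) • v - p = (5 / 4 : ℝ) • (q - p) := by
      simp only [v, smul_smul]
      field_simp
      module
    rw [hh, push_self (by positivity), dist_eq_norm, this, norm_smul, ← dist_eq_norm,
      Real.norm_of_nonneg (by norm_num)]

theorem exists_mem_fixingNbhd_lt_dist {p q : E} (hq : q ≠ p) (R : ℝ) :
    ∃ h ∈ fixingNbhd ({p} : Set E), R < dist ((h : E ≃ₜ E) q) p := by
  have hpow : ∀ n : ℕ, ∃ h ∈ fixingNbhd ({p} : Set E),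
      (5 / 4 : ℝ) ^ n * dist q p ≤ dist ((h : E ≃ₜ E) q) p := by
    intro n
    induction n with
    | zero => exact ⟨1, one_mem _, by simp⟩
    | succ n ih =>
      obtain ⟨h, hG, hh⟩ := ih
      have hhq : (h : E ≃ₜ E) q ≠ p :=
        dist_pos.1 (lt_of_lt_of_le (by have := dist_pos.2 hq; positivity) hh)
      obtain ⟨g, gG, hg⟩ := exists_mem_fixingNbhd_dist_eq hhq
      refine ⟨g * h, mul_mem gG hG, ?_⟩
      change _ ≤ dist ((g : E ≃ₜ E) ((h : E ≃ₜ E) q)) p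
      rw [hg, pow_succ]
      linarith
  obtain ⟨n, hn⟩ := pow_unbounded_of_one_lt (R / dist q p) (by norm_num : (1 : ℝ) < 5 / 4)
  obtain ⟨h, hG, hh⟩ := hpow n
  exact ⟨h, hG, lt_of_lt_of_le ((div_lt_iff₀ (dist_pos.2 hq)).1 hn) hh⟩

end Push

theorem stmt_6_general {d : ℕ}
    {p₁ p₂ : EuclideanSpace ℝ (Fin d)} (hp : p₁ ≠ p₂)
    (f : Homeo0 (EuclideanSpace ℝ (Fin d))) :
    ∃ f₁ f₂ f₃ : Homeo0 (EuclideanSpace ℝ (Fin d)),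
      f₁ ∈ fixingNbhd {p₁} ∧ f₂ ∈ fixingNbhd {p₂} ∧ f₃ ∈ fixingNbhd {p₁} ∧
        f = f₁ * f₂ * f₃ := by
  obtain ⟨K, hK, hfK⟩ := f.2.exists_isCompact_apply_eq_self
  obtain ⟨R, hKR⟩ := hK.isBounded.subset_closedBall p₁
  obtain ⟨h, hG, hR⟩ := exists_mem_fixingNbhd_lt_dist hp.symm R
  refine ⟨h, h⁻¹ * f * h, h⁻¹, hG, conj_mem_fixingNbhd hK.isClosed.isOpen_compl hfK ?_,
    inv_mem hG, by group⟩
  rintro _ rfl hK'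
  exact not_le.2 hR (hKR hK')

/-- Fragmentation with respect to two points: for distinct `p₁ ≠ p₂` in `ℝ^d`, any
`f ∈ Homeo₀(ℝ^d)` can be written `f = f₁ f₂ f₃` with `f₁, f₃ ∈ G_{p₁}^d` and
`f₂ ∈ G_{p₂}^d`, where `G_p^d` consists of homeomorphisms fixing a neighbourhood
of `p`. -/
theorem stmt_6 {d : ℕ} (hd : 1 ≤ d)
    {p₁ p₂ : EuclideanSpace ℝ (Fin d)} (hp : p₁ ≠ p₂)
    (f : Homeo0 (EuclideanSpace ℝ (Fin d))) :
    ∃ f₁ f₂ f₃ : Homeo0 (EuclideanSpace ℝ (Fin d)),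
      f₁ ∈ fixingNbhd {p₁} ∧ f₂ ∈ fixingNbhd {p₂} ∧ f₃ ∈ fixingNbhd {p₁} ∧
        f = f₁ * f₂ * f₃ :=
  stmt_6_general hp f
end

section
/- Let d ≥ 1 and let D and D' be two disjoint embedded (d−1)-dimensional balls in ℝᵈ. Then for every homeomorphism f in Homeo₀(ℝᵈ) there exist homeomorphisms h₁, h₃ in H_D^d and h₂ in H_{D'}^d such that f = h₁ ∘ h₂ ∘ h₃. -/
/-- The closed unit ball of `ℝ^{d-1} × {0} ⊆ ℝ^d` (a single point when `d = 1`). -/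
def stdBallSet (d : ℕ) : Set (EuclideanSpace ℝ (Fin d)) :=
  {x | ‖x‖ ≤ 1 ∧ ∀ h : d - 1 < d, x ⟨d - 1, h⟩ = 0}

/-- An embedded `(d-1)`-dimensional ball in `ℝ^d`: the image of the closed unit ball of
`ℝ^{d-1} × {0}` under a homeomorphism of `ℝ^d`. -/
def IsEmbeddedBall {d : ℕ} (D : Set (EuclideanSpace ℝ (Fin d))) : Prop :=
  ∃ e : EuclideanSpace ℝ (Fin d) ≃ₜ EuclideanSpace ℝ (Fin d), D = e '' stdBallSet d

open Set Filter

section Isotopy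

variable {X Y : Type*} [TopologicalSpace X] [TopologicalSpace Y]

theorem IsotopicToIdC.conj {f : X ≃ₜ X} (hf : IsotopicToIdC f) (e : X ≃ₜ Y) :
    IsotopicToIdC (e.symm.trans (f.trans e)) := by
  obtain ⟨H, K, hK, hl, h0, h1, hs⟩ := hf
  let eI : X × unitInterval ≃ₜ Y × unitInterval := e.prodCongr (Homeomorph.refl _)
  refine ⟨eI.symm.trans (H.trans eI), e '' K, hK.image e.continuous, fun p => ?_, fun y => ?_,
    fun y => ?_, fun t y hy => ?_⟩
  · simp [eI, hl]
  · simp [eI, h0]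
  · simp [eI, h1]
  · have : e.symm y ∉ K := fun h => hy ⟨_, h, e.apply_symm_apply y⟩
    simp [eI, hs t _ this]

theorem IsotopicToIdC.exists_compact_support {f : X ≃ₜ X} (hf : IsotopicToIdC f) :
    ∃ K, IsCompact K ∧ ∀ x ∉ K, f x = x := by
  obtain ⟨H, K, hK, -, -, h1, hs⟩ := hf
  exact ⟨K, hK, fun x hx => by simpa [h1] using hs 1 x hx⟩

theorem isClosedMap_of_eq_self_of_notMem [T2Space X] {F : X → X} (hF : Continuous F)
    {K : Set X} (hK : IsCompact K) (hFK : ∀ x ∉ K, F x = x) : IsClosedMap F := by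
  intro Z hZ
  have hfix : closure Kᶜ ⊆ {x | F x = x} := closure_minimal hFK (isClosed_eq hF continuous_id)
  have hFZ : F '' Z = F '' (Z ∩ K) ∪ (Z ∩ closure Kᶜ) := by
    ext y
    constructor
    · rintro ⟨x, hxZ, rfl⟩
      by_cases hx : x ∈ K
      · exact Or.inl ⟨x, ⟨hxZ, hx⟩, rfl⟩
      · rw [hFK x hx]
        exact Or.inr ⟨hxZ, subset_closure hx⟩
    · rintro (⟨x, hx, rfl⟩ | ⟨hyZ, hy⟩)
      · exact ⟨x, hx.1, rfl⟩
      · exact ⟨y, hyZ, hfix hy⟩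
  rw [hFZ]
  exact ((hK.inter_left hZ).image hF).isClosed.union (hZ.inter isClosed_closure)

theorem exists_isotopicToIdC_of_continuous [T2Space X] (Φ : unitInterval → X ≃ X)
    (hΦ : Continuous fun p : X × unitInterval => Φ p.2 p.1) (hΦ0 : ∀ x, Φ 0 x = x)
    {K : Set X} (hK : IsCompact K) (hΦK : ∀ t, ∀ x ∉ K, Φ t x = x) :
    ∃ f : X ≃ₜ X, ⇑f = Φ 1 ∧ IsotopicToIdC f := by
  let H : X × unitInterval ≃ X × unitInterval :=
    { toFun := fun p => (Φ p.2 p.1, p.2)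
      invFun := fun p => ((Φ p.2).symm p.1, p.2)
      left_inv := fun p => by simp
      right_inv := fun p => by simp }
  have hH : Continuous H := hΦ.prodMk continuous_snd
  have hHK : ∀ p ∉ K ×ˢ (univ : Set unitInterval), H p = p := fun p hp =>
    Prod.ext (hΦK p.2 p.1 fun h => hp ⟨h, mem_univ _⟩) rfl
  have hΦ1 : Continuous (Φ 1) := hΦ.comp (continuous_id.prodMk continuous_const)
  refine ⟨(Φ 1).toHomeomorphOfContinuousClosed hΦ1
    (isClosedMap_of_eq_self_of_notMem hΦ1 hK (hΦK 1)), rfl,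
    H.toHomeomorphOfContinuousClosed hH
      (isClosedMap_of_eq_self_of_notMem hH (hK.prod isCompact_univ) hHK),
    K, hK, fun p => rfl, fun x => ?_, fun x => rfl, fun t x hx => hHK (x, t) fun h => hx h.1⟩
  exact Prod.ext (hΦ0 x) rfl

end Isotopy

section Squeezable

variable {X Y : Type*} [TopologicalSpace X] [TopologicalSpace Y]

def IsSqueezable (B : Set X) : Prop :=
  ∀ K U : Set X, IsCompact K → IsOpen U → B ⊆ U →
    ∃ φ ∈ fixingNbhd B, (φ : X ≃ₜ X) '' K ⊆ U

theorem IsSqueezable.image {B : Set X} (hB : IsSqueezable B) (e : X ≃ₜ Y) :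
    IsSqueezable (e '' B) := by
  intro K U hK hU hBU
  obtain ⟨φ, ⟨V, hV, hBV, hφV⟩, hφK⟩ := hB (e.symm '' K) (e ⁻¹' U)
    (hK.image e.symm.continuous) (hU.preimage e.continuous) (image_subset_iff.1 hBU)
  refine ⟨⟨e.symm.trans ((φ : X ≃ₜ X).trans e), IsotopicToIdC.conj φ.2 e⟩,
    ⟨e '' V, e.isOpenMap V hV, image_mono hBV, ?_⟩, ?_⟩
  · rintro _ ⟨x, hx, rfl⟩
    show e ((φ : X ≃ₜ X) (e.symm (e x))) = e x
    rw [e.symm_apply_apply, hφV x hx]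
  · rintro _ ⟨y, hy, rfl⟩
    exact hφK ⟨e.symm y, ⟨y, hy, rfl⟩, rfl⟩

theorem mul_mul_inv_mem_fixingNbhd [T2Space X] {f : Homeo0 X} {K S : Set X} (hK : IsCompact K)
    (hfK : ∀ x ∉ K, (f : X ≃ₜ X) x = x) {φ : Homeo0 X} (hφK : (φ : X ≃ₜ X) '' K ⊆ Sᶜ) :
    φ * f * φ⁻¹ ∈ fixingNbhd S := by
  refine ⟨((φ : X ≃ₜ X) '' K)ᶜ, (hK.image (φ : X ≃ₜ X).continuous).isClosed.isOpen_compl,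
    subset_compl_comm.1 hφK, fun y hy => ?_⟩
  have : (φ : X ≃ₜ X).symm y ∉ K := fun h => hy ⟨_, h, (φ : X ≃ₜ X).apply_symm_apply y⟩
  show (φ : X ≃ₜ X) ((f : X ≃ₜ X) ((φ : X ≃ₜ X).symm y)) = y
  rw [hfK _ this, Homeomorph.apply_symm_apply]

theorem IsSqueezable.exists_eq_mul_mul [T2Space X] {D D' : Set X} (hD : IsSqueezable D)
    (hD' : IsClosed D') (hDD' : Disjoint D D') (f : Homeo0 X) :
    ∃ h₁ h₂ h₃ : Homeo0 X, h₁ ∈ fixingNbhd D ∧ h₂ ∈ fixingNbhd D' ∧ h₃ ∈ fixingNbhd D ∧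
      f = h₁ * h₂ * h₃ := by
  obtain ⟨K, hK, hfK⟩ := IsotopicToIdC.exists_compact_support f.2
  obtain ⟨φ, hφD, hφK⟩ := hD K D'ᶜ hK hD'.isOpen_compl hDD'.subset_compl_right
  exact ⟨φ⁻¹, φ * f * φ⁻¹, φ, inv_mem hφD, mul_mul_inv_mem_fixingNbhd hK hfK hφK, hφD,
    by group⟩

end Squeezable

section FlatBall

variable {E : Type*} [NormedAddCommGroup E]

variable (E) in
def flatBall : Set (E × ℝ) := {p | ‖p.1‖ ≤ 1 ∧ p.2 = 0}

def normExcess (y : E) : ℝ := max (‖y‖ - 1) 0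

/-- The sup-metric distance from `p` to `flatBall E`. -/
def flatDist (p : E × ℝ) : ℝ := max (normExcess p.1) |p.2|

theorem normExcess_nonneg (y : E) : 0 ≤ normExcess y := le_max_right _ _

theorem normExcess_of_norm_le {y : E} (hy : ‖y‖ ≤ 1) : normExcess y = 0 :=
  max_eq_right (by linarith)

theorem normExcess_of_one_lt {y : E} (hy : 1 < ‖y‖) : normExcess y = ‖y‖ - 1 :=
  max_eq_left (by linarith)

theorem flatDist_nonneg (p : E × ℝ) : 0 ≤ flatDist p :=
  (normExcess_nonneg _).trans (le_max_left _ _)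

theorem flatDist_eq_zero_iff {p : E × ℝ} : flatDist p = 0 ↔ p ∈ flatBall E := by
  rw [← (flatDist_nonneg p).ge_iff_eq', flatDist, normExcess, max_le_iff, max_le_iff,
    abs_nonpos_iff, sub_nonpos]
  simp [flatBall]

@[fun_prop]
theorem continuous_flatDist : Continuous (flatDist : E × ℝ → ℝ) := by
  unfold flatDist normExcess; fun_prop

theorem isCompact_flatDist_le [ProperSpace E] (r : ℝ) :
    IsCompact {p : E × ℝ | flatDist p ≤ r} := by
  refine (isCompact_closedBall (0 : E × ℝ) (r + 1)).of_isClosed_subset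
    (isClosed_le continuous_flatDist continuous_const) fun p hp => ?_
  have h1 : ‖p.1‖ - 1 ≤ r := (le_max_left _ _).trans ((le_max_left _ _).trans hp)
  have h2 : |p.2| ≤ r := (le_max_right _ _).trans hp
  rw [mem_closedBall_zero_iff, Prod.norm_def, Real.norm_eq_abs]
  exact max_le (by linarith) (by linarith)

theorem isCompact_flatBall [ProperSpace E] : IsCompact (flatBall E) := by
  convert isCompact_flatDist_le (E := E) 0 using 1
  ext p
  rw [mem_ofPred, ← flatDist_eq_zero_iff, le_antisymm_iff, and_iff_left (flatDist_nonneg p)]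

theorem exists_flatDist_le_subset [ProperSpace E] {U : Set (E × ℝ)} (hU : IsOpen U)
    (hBU : flatBall E ⊆ U) : ∃ ε > 0, {p | flatDist p ≤ ε} ⊆ U := by
  have hB : ⋂ ε : Ioi (0 : ℝ), {p : E × ℝ | flatDist p ≤ ε} ⊆ flatBall E := fun p hp => by
    rw [← flatDist_eq_zero_iff]
    exact le_antisymm (le_of_forall_gt_imp_ge_of_dense fun ε hε => mem_iInter.1 hp ⟨ε, hε⟩)
      (flatDist_nonneg p)
  obtain ⟨⟨ε, hε⟩, hεU⟩ := exists_subset_nhds_of_isCompact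
    (V := fun ε : Ioi (0 : ℝ) => {p : E × ℝ | flatDist p ≤ ε})
    (Monotone.directed_ge fun _ _ h _ (hp : flatDist _ ≤ _) => hp.trans h)
    (fun ε => isCompact_flatDist_le ε) fun p hp => hU.mem_nhds (hBU (hB hp))
  exact ⟨ε, hε, hεU⟩

variable [NormedSpace ℝ E]

/-- Multiplies `flatDist` by `c ≥ 0`: the first component is moved radially so that its norm
in excess of `1` is multiplied by `c`. -/
noncomputable def flatScale (c : ℝ) (p : E × ℝ) : E × ℝ :=
  ((1 + (c - 1) * normExcess p.1 / max ‖p.1‖ 1) • p.1, c * p.2)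

theorem flatScale_of_norm_le {p : E × ℝ} (hp : ‖p.1‖ ≤ 1) (c : ℝ) :
    flatScale c p = (p.1, c * p.2) := by
  simp [flatScale, normExcess_of_norm_le hp]

theorem flatScale_of_one_lt {p : E × ℝ} (hp : 1 < ‖p.1‖) (c : ℝ) :
    flatScale c p = (((1 + c * (‖p.1‖ - 1)) / ‖p.1‖) • p.1, c * p.2) := by
  rw [flatScale, normExcess_of_one_lt hp, max_eq_left hp.le]
  congr 2
  field_simp
  ring

theorem norm_flatScale_fst {p : E × ℝ} (hp : 1 < ‖p.1‖) {c : ℝ} (hc : 0 ≤ c) :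
    ‖(flatScale c p).1‖ = 1 + c * (‖p.1‖ - 1) := by
  have : 0 ≤ 1 + c * (‖p.1‖ - 1) := by nlinarith
  rw [flatScale_of_one_lt hp, norm_smul, Real.norm_eq_abs, abs_div, abs_of_nonneg this,
    abs_norm, div_mul_cancel₀ _ (by positivity)]

theorem normExcess_flatScale_fst (p : E × ℝ) {c : ℝ} (hc : 0 ≤ c) :
    normExcess (flatScale c p).1 = c * normExcess p.1 := by
  rcases le_or_gt ‖p.1‖ 1 with hp | hp
  · rw [flatScale_of_norm_le hp, normExcess_of_norm_le hp, mul_zero]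
  · have : 1 + c * (‖p.1‖ - 1) - 1 = c * (‖p.1‖ - 1) := by ring
    rw [normExcess_of_one_lt hp, normExcess, norm_flatScale_fst hp hc, this,
      max_eq_left (by nlinarith)]

theorem flatDist_flatScale (p : E × ℝ) {c : ℝ} (hc : 0 ≤ c) :
    flatDist (flatScale c p) = c * flatDist p := by
  rw [flatDist, normExcess_flatScale_fst p hc, flatDist, mul_max_of_nonneg _ _ hc]
  simp [flatScale, abs_mul, abs_of_nonneg hc]

theorem flatScale_flatScale (p : E × ℝ) (c : ℝ) {c' : ℝ} (hc' : 0 < c') :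
    flatScale c (flatScale c' p) = flatScale (c * c') p := by
  rcases le_or_gt ‖p.1‖ 1 with hp | hp
  · rw [flatScale_of_norm_le hp c', flatScale_of_norm_le hp (c * c'),
      flatScale_of_norm_le (p := (p.1, c' * p.2)) hp, mul_assoc]
  · refine Prod.ext ?_ (by simp [flatScale, mul_assoc])
    have hp' : 1 < ‖(flatScale c' p).1‖ := by
      rw [norm_flatScale_fst hp hc'.le]; nlinarith
    rw [flatScale_of_one_lt hp', norm_flatScale_fst hp hc'.le, flatScale_of_one_lt hp c',
      flatScale_of_one_lt hp (c * c')]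
    dsimp only
    rw [smul_smul]
    congr 1
    have : 0 < 1 + c' * (‖p.1‖ - 1) := by nlinarith
    field_simp
    ring

theorem flatScale_one (p : E × ℝ) : flatScale 1 p = p := by
  simp [flatScale]

theorem continuous_flatScale : Continuous fun q : ℝ × (E × ℝ) => flatScale q.1 q.2 := by
  unfold flatScale normExcess
  fun_prop (disch := intro; positivity)

end FlatBall

section Radial

/-- When `g` fixes `(-∞, δ]`, this is `1` there and `g r / r` for `r ≥ δ`: a continuous version
of `g r / r`. -/
noncomputable def radialFactor (g : ℝ → ℝ) (δ r : ℝ) : ℝ := 1 + (g r - r) / max r δ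

variable {g g' : ℝ → ℝ} {δ : ℝ}

theorem radialFactor_eq_one {r : ℝ} (h : g r = r) : radialFactor g δ r = 1 := by
  simp [radialFactor, h]

theorem radialFactor_mul_self (hδ : 0 < δ) (hg : ∀ r ≤ δ, g r = r) (r : ℝ) :
    radialFactor g δ r * r = g r := by
  rcases le_or_gt r δ with hr | hr
  · rw [radialFactor_eq_one (hg r hr), one_mul, hg r hr]
  · rw [radialFactor, max_eq_left hr.le]
    field_simp [(hδ.trans hr).ne']
    ring

theorem radialFactor_pos (hδ : 0 < δ) (hg : ∀ r ≤ δ, g r = r) (hgm : Monotone g) (r : ℝ) :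
    0 < radialFactor g δ r := by
  rcases le_or_gt r δ with hr | hr
  · rw [radialFactor_eq_one (hg r hr)]
    exact one_pos
  · have hgr : 0 < radialFactor g δ r * r := by
      rw [radialFactor_mul_self hδ hg]
      exact hδ.trans_le ((hg δ le_rfl).symm.le.trans (hgm hr.le))
    exact pos_of_mul_pos_left hgr (hδ.trans hr).le

theorem radialFactor_comp (hδ : 0 < δ) (hg : ∀ r ≤ δ, g r = r) (hg' : ∀ r ≤ δ, g' r = r)
    (r : ℝ) : radialFactor g' δ (g r) * radialFactor g δ r = radialFactor (g' ∘ g) δ r := by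
  have hg'g : ∀ r ≤ δ, (g' ∘ g) r = r := fun r hr => by simp [hg r hr, hg' r hr]
  rcases le_or_gt r δ with hr | hr
  · rw [radialFactor_eq_one (hg r hr), hg r hr, radialFactor_eq_one (hg' r hr),
      radialFactor_eq_one (hg'g r hr), one_mul]
  · refine mul_right_cancel₀ (hδ.trans hr).ne' ?_
    rw [mul_assoc, radialFactor_mul_self hδ hg, radialFactor_mul_self hδ hg',
      radialFactor_mul_self hδ hg'g, Function.comp_apply]

variable {E : Type*} [NormedAddCommGroup E] [NormedSpace ℝ E]

noncomputable def radialMap (g : ℝ → ℝ) (δ : ℝ) (p : E × ℝ) : E × ℝ :=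
  flatScale (radialFactor g δ (flatDist p)) p

theorem radialMap_eq_self {p : E × ℝ} (h : g (flatDist p) = flatDist p) :
    radialMap g δ p = p := by
  rw [radialMap, radialFactor_eq_one h, flatScale_one]

theorem flatDist_radialMap (hδ : 0 < δ) (hg : ∀ r ≤ δ, g r = r) (hgm : Monotone g)
    (p : E × ℝ) : flatDist (radialMap g δ p) = g (flatDist p) := by
  rw [radialMap, flatDist_flatScale p (radialFactor_pos hδ hg hgm _).le,
    radialFactor_mul_self hδ hg]

theorem radialMap_radialMap (hδ : 0 < δ) (hg : ∀ r ≤ δ, g r = r) (hg' : ∀ r ≤ δ, g' r = r)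
    (hgm : Monotone g) (p : E × ℝ) :
    radialMap g' δ (radialMap g δ p) = radialMap (g' ∘ g) δ p := by
  rw [radialMap, flatDist_radialMap hδ hg hgm, radialMap,
    flatScale_flatScale p _ (radialFactor_pos hδ hg hgm _), radialFactor_comp hδ hg hg',
    radialMap]

theorem continuous_radialMap {T : Type*} [TopologicalSpace T] {g : T → ℝ → ℝ}
    (hg : Continuous fun q : T × ℝ => g q.1 q.2) (hδ : 0 < δ) :
    Continuous fun q : (E × ℝ) × T => radialMap (g q.2) δ q.1 := by
  have hgN : Continuous fun q : (E × ℝ) × T => g q.2 (flatDist q.1) :=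
    hg.comp (continuous_snd.prodMk (continuous_flatDist.comp continuous_fst))
  refine continuous_flatScale.comp (Continuous.prodMk ?_ continuous_fst)
  exact continuous_const.add ((hgN.sub (by fun_prop)).div (by fun_prop)
    fun q => (hδ.trans_le (le_max_right _ _)).ne')

variable (E) in
noncomputable def radialEquiv (g : ℝ ≃o ℝ) (hδ : 0 < δ) (hg : ∀ r ≤ δ, g r = r) :
    (E × ℝ) ≃ (E × ℝ) :=
  have hg_symm : ∀ r ≤ δ, g.symm r = r := fun r hr => g.symm_apply_eq.2 (hg r hr).symm
  { toFun := radialMap g δ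
    invFun := radialMap g.symm δ
    left_inv := fun p => by
      rw [radialMap_radialMap hδ hg hg_symm g.monotone]
      exact radialMap_eq_self (g.symm_apply_apply _)
    right_inv := fun p => by
      rw [radialMap_radialMap hδ hg_symm hg g.symm.monotone]
      exact radialMap_eq_self (g.apply_symm_apply _) }

end Radial

section Squeeze

/-- The piecewise linear map which is the identity on `(-∞, δ] ∪ [M, ∞)`, sends `R` to `a` and is
affine on `[δ, R]` and on `[R, M]` (for `δ < a ≤ R < M`). -/
noncomputable def squeezeProfile (δ R M a r : ℝ) : ℝ :=
  min r (max (δ + (a - δ) / (R - δ) * (r - δ)) (M + (M - a) / (M - R) * (r - M)))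

variable {δ R M a : ℝ}

theorem squeezeProfile_of_le (hδa : δ < a) (haR : a ≤ R) {r : ℝ} (hr : r ≤ δ) :
    squeezeProfile δ R M a r = r := by
  have hs : (a - δ) / (R - δ) ≤ 1 := div_le_one_of_le₀ (by linarith) (by linarith)
  exact min_eq_left (le_max_of_le_left (by nlinarith))

theorem squeezeProfile_of_ge (haR : a ≤ R) (hRM : R < M) {r : ℝ} (hr : M ≤ r) :
    squeezeProfile δ R M a r = r := by
  have hs : 1 ≤ (M - a) / (M - R) := (one_le_div₀ (by linarith)).2 (by linarith)
  exact min_eq_left (le_max_of_le_right (by nlinarith))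

theorem squeezeProfile_apply_self (hδR : δ < R) (hRM : R < M) (haR : a ≤ R) :
    squeezeProfile δ R M a R = a := by
  have h₁ : δ + (a - δ) / (R - δ) * (R - δ) = a := by
    rw [div_mul_cancel₀ _ (by linarith)]; ring
  have h₂ : M + (M - a) / (M - R) * (R - M) = a := by
    rw [← neg_sub M R, mul_neg, div_mul_cancel₀ _ (by linarith)]; ring
  rw [squeezeProfile, h₁, h₂, max_self, min_eq_right haR]

theorem squeezeProfile_eq_id (hδR : δ < R) (hRM : R < M) (r : ℝ) :
    squeezeProfile δ R M R r = r := by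
  rw [squeezeProfile, div_self (by linarith), div_self (by linarith)]
  simp

theorem strictMono_squeezeProfile (hδa : δ < a) (haM : a < M) (hδR : δ < R) (hRM : R < M) :
    StrictMono (squeezeProfile δ R M a) := by
  have h₁ : 0 < (a - δ) / (R - δ) := div_pos (by linarith) (by linarith)
  have h₂ : 0 < (M - a) / (M - R) := div_pos (by linarith) (by linarith)
  intro r s hrs
  exact min_lt_min hrs (max_lt_max (by nlinarith) (by nlinarith))

theorem continuous_squeezeProfile :
    Continuous fun q : ℝ × ℝ => squeezeProfile δ R M q.1 q.2 := by
  unfold squeezeProfile; fun_prop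

theorem surjective_squeezeProfile (hδa : δ < a) (haR : a ≤ R) (hRM : R < M) :
    Function.Surjective (squeezeProfile δ R M a) :=
  (continuous_squeezeProfile.comp (continuous_const.prodMk continuous_id)).surjective
    (tendsto_id.congr' <| (eventually_ge_atTop M).mono fun _ hr =>
      (squeezeProfile_of_ge haR hRM hr).symm)
    (tendsto_id.congr' <| (eventually_le_atBot δ).mono fun _ hr =>
      (squeezeProfile_of_le hδa haR hr).symm)

noncomputable def squeezeOrderIso (hδa : δ < a) (haR : a ≤ R) (hRM : R < M) : ℝ ≃o ℝ :=
  StrictMono.orderIsoOfSurjective _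
    (strictMono_squeezeProfile hδa (haR.trans_lt hRM) (hδa.trans_le haR) hRM)
    (surjective_squeezeProfile hδa haR hRM)

theorem squeezeOrderIso_apply (hδa : δ < a) (haR : a ≤ R) (hRM : R < M) (r : ℝ) :
    squeezeOrderIso hδa haR hRM r = squeezeProfile δ R M a r :=
  rfl

variable {E : Type*} [NormedAddCommGroup E] [NormedSpace ℝ E] [ProperSpace E]

theorem exists_isotopicToIdC_squeeze {ε : ℝ} (hδ : 0 < δ) (hδε : δ < ε) (hεR : ε ≤ R) :
    ∃ ψ : (E × ℝ) ≃ₜ (E × ℝ), IsotopicToIdC ψ ∧ (∀ p, flatDist p ≤ δ → ψ p = p) ∧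
      ∀ p, flatDist p ≤ R → flatDist (ψ p) ≤ ε := by
  let a : unitInterval → ℝ := fun t => R - t * (R - ε)
  have ha_ge : ∀ t, ε ≤ a t := fun t => by nlinarith [t.2.1, t.2.2]
  have ha_le : ∀ t, a t ≤ R := fun t => by nlinarith [t.2.1, t.2.2]
  have hRM : R < R + 1 := lt_add_one R
  let g : unitInterval → ℝ ≃o ℝ := fun t =>
    squeezeOrderIso (hδε.trans_le (ha_ge t)) (ha_le t) hRM
  have hgδ : ∀ t, ∀ r ≤ δ, g t r = r := fun t _ hr =>
    squeezeProfile_of_le (hδε.trans_le (ha_ge t)) (ha_le t) hr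
  have hgM : ∀ t, ∀ r, R + 1 ≤ r → g t r = r := fun t _ hr =>
    squeezeProfile_of_ge (ha_le t) hRM hr
  have hg0 : ∀ r, g 0 r = r := fun r => by
    rw [squeezeOrderIso_apply]
    simp only [a, Icc.coe_zero, zero_mul, sub_zero]
    exact squeezeProfile_eq_id (hδε.trans_le hεR) hRM r
  have hg1R : g 1 R = ε := by
    rw [squeezeOrderIso_apply]
    simp only [a, Icc.coe_one, one_mul, sub_sub_cancel]
    exact squeezeProfile_apply_self (hδε.trans_le hεR) hRM hεR
  have hg : Continuous fun q : unitInterval × ℝ => g q.1 q.2 :=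
    continuous_squeezeProfile.comp ((by fun_prop : Continuous a).prodMap continuous_id)
  have hΦ : Continuous fun p : (E × ℝ) × unitInterval =>
      radialEquiv E (g p.2) hδ (hgδ p.2) p.1 :=
    continuous_radialMap (g := fun t r => g t r) hg hδ
  obtain ⟨ψ, hψ, hiso⟩ := exists_isotopicToIdC_of_continuous
    (fun t => radialEquiv E (g t) hδ (hgδ t)) hΦ
    (fun p => radialMap_eq_self (hg0 _)) (isCompact_flatDist_le (R + 1))
    (fun t p hp => radialMap_eq_self (hgM t _ (not_le.1 hp).le))
  refine ⟨ψ, hiso, fun p hp => ?_, fun p hp => ?_⟩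
  · rw [hψ]
    exact radialMap_eq_self (hgδ 1 _ hp)
  · rw [hψ]
    calc flatDist (radialMap (g 1) δ p) = g 1 (flatDist p) :=
          flatDist_radialMap hδ (hgδ 1) (g 1).monotone p
      _ ≤ g 1 R := (g 1).monotone hp
      _ = ε := hg1R

theorem isSqueezable_flatBall : IsSqueezable (flatBall E) := by
  intro K U hK hU hBU
  obtain ⟨ε, hε, hεU⟩ := exists_flatDist_le_subset hU hBU
  obtain ⟨R, hR⟩ := (hK.image continuous_flatDist).bddAbove
  obtain ⟨ψ, hψ, hfix, hmaps⟩ := exists_isotopicToIdC_squeeze (E := E) (half_pos hε)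
    (half_lt_self hε) (le_max_left ε R)
  refine ⟨⟨ψ, hψ⟩, ⟨{p | flatDist p < ε / 2}, isOpen_lt continuous_flatDist continuous_const,
    fun p hp => ?_, fun p hp => hfix p (le_of_lt hp)⟩, ?_⟩
  · rw [mem_ofPred, flatDist_eq_zero_iff.2 hp]
    exact half_pos hε
  · rintro _ ⟨p, hp, rfl⟩
    exact hεU (hmaps p ((hR ⟨p, hp, rfl⟩).trans (le_max_right _ _)))

end Squeeze

def euclideanSnoc (n : ℕ) : EuclideanSpace ℝ (Fin n) × ℝ ≃ₜ EuclideanSpace ℝ (Fin (n + 1)) where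
  toFun p := WithLp.toLp 2 (Fin.snoc (α := fun _ => ℝ) (WithLp.ofLp p.1) p.2)
  invFun x := (WithLp.toLp 2 (Fin.init (WithLp.ofLp x)), x (Fin.last n))
  left_inv p := by simp
  right_inv x := by simp
  continuous_toFun := by fun_prop
  continuous_invFun := by fun_prop

theorem euclideanSnoc_image_flatBall (n : ℕ) :
    euclideanSnoc n '' flatBall _ = stdBallSet (n + 1) := by
  have hlast : ∀ h : n + 1 - 1 < n + 1, (⟨n + 1 - 1, h⟩ : Fin (n + 1)) = Fin.last n :=
    fun _ => Fin.ext (by simp)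
  ext x
  rw [Homeomorph.image_eq_preimage_symm]
  simp only [stdBallSet, flatBall, mem_preimage, mem_ofPred, hlast,
    forall_prop_of_true (by omega : n + 1 - 1 < n + 1)]
  change ‖WithLp.toLp 2 (Fin.init (WithLp.ofLp x))‖ ≤ 1 ∧ x (Fin.last n) = 0 ↔ _
  refine and_congr_left fun hx => ?_
  rw [EuclideanSpace.norm_eq, EuclideanSpace.norm_eq, Fin.sum_univ_castSucc]
  simp [hx, Fin.init]

theorem isSqueezable_stdBallSet (n : ℕ) : IsSqueezable (stdBallSet (n + 1)) := by
  rw [← euclideanSnoc_image_flatBall]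
  exact isSqueezable_flatBall.image _

theorem isCompact_stdBallSet (n : ℕ) : IsCompact (stdBallSet (n + 1)) := by
  rw [← euclideanSnoc_image_flatBall]
  exact isCompact_flatBall.image (euclideanSnoc n).continuous

/-- Fragmentation with respect to two disjoint embedded `(d-1)`-dimensional balls `D`,
`D'` in `ℝ^d`: any `f ∈ Homeo₀(ℝ^d)` can be written `f = h₁ h₂ h₃` with
`h₁, h₃ ∈ H_D^d` and `h₂ ∈ H_{D'}^d`. -/
theorem stmt_7 {d : ℕ} (hd : 1 ≤ d)
    {D D' : Set (EuclideanSpace ℝ (Fin d))}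
    (hD : IsEmbeddedBall D) (hD' : IsEmbeddedBall D') (hdisj : Disjoint D D')
    (f : Homeo0 (EuclideanSpace ℝ (Fin d))) :
    ∃ h₁ h₂ h₃ : Homeo0 (EuclideanSpace ℝ (Fin d)),
      h₁ ∈ fixingNbhd D ∧ h₂ ∈ fixingNbhd D' ∧ h₃ ∈ fixingNbhd D ∧
        f = h₁ * h₂ * h₃ := by
  obtain ⟨n, rfl⟩ : ∃ n, d = n + 1 := ⟨d - 1, by omega⟩
  obtain ⟨e, rfl⟩ := hD
  obtain ⟨e', rfl⟩ := hD'
  exact ((isSqueezable_stdBallSet n).image e).exists_eq_mul_mul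
    ((isCompact_stdBallSet n).image e'.continuous).isClosed hdisj f
end

section
/- Let d ≥ 1 and let U be a nonempty open subset of ℝᵈ. Then there exists a subgroup of Homeo₀(ℝᵈ) isomorphic (as an abstract group) to Homeo_ℤ(ℝ) all of whose elements are supported in U (i.e., every element of the subgroup equals the identity outside U). -/
/-- `Homeo_ℤ(ℝ)`: the group of homeomorphisms `f` of `ℝ` with `f (x + 1) = f x + 1`
for all `x`. -/
def HomeoZ : Subgroup (ℝ ≃ₜ ℝ) where
  carrier := {f | ∀ x : ℝ, f (x + 1) = f x + 1}
  one_mem' := fun _ => rfl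
  mul_mem' := by
    intro f g hf hg x
    show f (g (x + 1)) = f (g x) + 1
    rw [hg, hf]
  inv_mem' := by
    intro f hf x
    apply f.injective
    show f (f.symm (x + 1)) = f (f.symm x + 1)
    rw [hf, f.apply_symm_apply, f.apply_symm_apply]

/-!
Every element of `Homeo_ℤ(ℝ)` is increasing. Conjugating an increasing homeomorphism `f` of `ℝ`
by `ℝ ≃o (-1, 1)` and extending by the identity gives a homeomorphism `compress f` supported in
`[-1, 1]` that moves points by at most `2`, and `f ↦ compress f` is injective and multiplicative.

On `ℝ × F`, let the fibre over `z` be acted on by `compress f` rescaled to `[-s, s]`, where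
`s = t * (δ - dist z z₀)` (the identity when `s ≤ 0`). Rescaling is a conjugation, so for each `t`
this is multiplicative in `f`; it is supported in the ball of radius `δ` about `(0, z₀)`, it is the
identity at `t = 0`, and the bounded displacement makes it jointly continuous as `s → 0`. Hence
`t ∈ [0, 1]` is a compactly supported isotopy. A homeomorphism `ℝ × ℝ^(d-1) ≃ₜ ℝ^d` taking a small
ball about `(0, 0)` into `U` transports the resulting subgroup into `Homeo₀(ℝ^d)`.
-/

open Set Function

noncomputable section

def homeoPlus : Subgroup (ℝ ≃ₜ ℝ) where
  carrier := {f | StrictMono f}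
  one_mem' := strictMono_id
  mul_mem' hf hg := hf.comp hg
  inv_mem' {f} hf x y hxy := hf.lt_iff_lt.1 <| by
    simpa only [Homeomorph.inv_apply, Homeomorph.apply_symm_apply] using hxy

theorem HomeoZ_le_homeoPlus : HomeoZ ≤ homeoPlus := by
  intro f hf
  refine (f.continuous.strictMono_of_inj f.injective).resolve_right fun hanti => ?_
  have := hanti (lt_add_one (0 : ℝ))
  rw [hf 0] at this
  linarith

section Compress

local notation "φ" => orderIsoIooNegOneOne ℝ

def compress (f : ℝ → ℝ) (x : ℝ) : ℝ :=
  if h : x ∈ Ioo (-1 : ℝ) 1 then φ (f ((φ).symm ⟨x, h⟩)) else x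

theorem compress_orderIsoIooNegOneOne (f : ℝ → ℝ) (y : ℝ) : compress f (φ y) = φ (f y) := by
  simp [compress, (φ y).2]

theorem compress_of_notMem (f : ℝ → ℝ) {x : ℝ} (hx : x ∉ Ioo (-1 : ℝ) 1) : compress f x = x :=
  dif_neg hx

theorem exists_orderIsoIooNegOneOne_eq {x : ℝ} (hx : x ∈ Ioo (-1 : ℝ) 1) : ∃ y, (φ y : ℝ) = x :=
  ⟨(φ).symm ⟨x, hx⟩, by simp⟩

theorem compress_comp (f g : ℝ → ℝ) : compress (f ∘ g) = compress f ∘ compress g := by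
  funext x
  by_cases hx : x ∈ Ioo (-1 : ℝ) 1
  · obtain ⟨y, rfl⟩ := exists_orderIsoIooNegOneOne_eq hx
    simp [compress_orderIsoIooNegOneOne]
  · simp [compress_of_notMem _ hx]

theorem compress_id : compress id = id := by
  funext x
  by_cases hx : x ∈ Ioo (-1 : ℝ) 1
  · obtain ⟨y, rfl⟩ := exists_orderIsoIooNegOneOne_eq hx
    simp [compress_orderIsoIooNegOneOne]
  · simp [compress_of_notMem _ hx]

theorem compress_injective : Injective compress := fun f g h => funext fun y =>
  (φ).injective <| Subtype.ext <| by
    simpa only [compress_orderIsoIooNegOneOne] using congrFun h (φ y)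

theorem compress_mem_Ioo (f : ℝ → ℝ) {x : ℝ} (hx : x ∈ Ioo (-1 : ℝ) 1) :
    compress f x ∈ Ioo (-1 : ℝ) 1 := by
  obtain ⟨y, rfl⟩ := exists_orderIsoIooNegOneOne_eq hx
  rw [compress_orderIsoIooNegOneOne]
  exact (φ (f y)).2

theorem abs_compress_sub_le (f : ℝ → ℝ) (x : ℝ) : |compress f x - x| ≤ 2 := by
  by_cases hx : x ∈ Ioo (-1 : ℝ) 1
  · have hfx := compress_mem_Ioo f hx
    rw [abs_le]
    constructor <;> linarith [hx.1, hx.2, hfx.1, hfx.2]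
  · simp [compress_of_notMem _ hx]

theorem strictMono_compress {f : ℝ → ℝ} (hf : StrictMono f) : StrictMono (compress f) := by
  intro x x' hlt
  by_cases hx : x ∈ Ioo (-1 : ℝ) 1 <;> by_cases hx' : x' ∈ Ioo (-1 : ℝ) 1
  · obtain ⟨y, rfl⟩ := exists_orderIsoIooNegOneOne_eq hx
    obtain ⟨y', rfl⟩ := exists_orderIsoIooNegOneOne_eq hx'
    simpa only [compress_orderIsoIooNegOneOne, Subtype.coe_lt_coe, OrderIso.lt_iff_lt,
      hf.lt_iff_lt] using hlt
  · have : 1 ≤ x' := le_of_not_gt fun h => hx' ⟨hx.1.trans hlt, h⟩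
    rw [compress_of_notMem f hx']
    linarith [(compress_mem_Ioo f hx).2]
  · have : x ≤ -1 := le_of_not_gt fun h => hx ⟨h, hlt.trans hx'.2⟩
    rw [compress_of_notMem f hx]
    linarith [(compress_mem_Ioo f hx').1]
  · rwa [compress_of_notMem f hx, compress_of_notMem f hx']

theorem surjective_compress {f : ℝ → ℝ} (hf : Surjective f) : Surjective (compress f) := by
  intro x
  by_cases hx : x ∈ Ioo (-1 : ℝ) 1
  · obtain ⟨y, rfl⟩ := exists_orderIsoIooNegOneOne_eq hx
    obtain ⟨z, rfl⟩ := hf y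
    exact ⟨φ z, compress_orderIsoIooNegOneOne f z⟩
  · exact ⟨x, compress_of_notMem f hx⟩

theorem continuous_compress {f : ℝ → ℝ} (hf : StrictMono f) (hs : Surjective f) :
    Continuous (compress f) :=
  (strictMono_compress hf).monotone.continuous_of_surjective (surjective_compress hs)

end Compress

def dilate (e : ℝ → ℝ) (s y : ℝ) : ℝ := if 0 < s then s * e (y / s) else y

theorem dilate_of_pos (e : ℝ → ℝ) {s : ℝ} (hs : 0 < s) (y : ℝ) : dilate e s y = s * e (y / s) :=
  if_pos hs

theorem dilate_of_nonpos (e : ℝ → ℝ) {s : ℝ} (hs : s ≤ 0) (y : ℝ) : dilate e s y = y :=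
  if_neg hs.not_gt

theorem dilate_comp (e e' : ℝ → ℝ) (s : ℝ) : dilate (e ∘ e') s = dilate e s ∘ dilate e' s := by
  funext y
  rcases lt_or_ge 0 s with hs | hs
  · simp [dilate_of_pos _ hs, hs.ne']
  · simp [dilate_of_nonpos _ hs]

theorem dilate_id (s : ℝ) : dilate id s = id := by
  funext y
  rcases lt_or_ge 0 s with hs | hs
  · simp [dilate_of_pos _ hs, mul_div_cancel₀ _ hs.ne']
  · simp [dilate_of_nonpos _ hs]

theorem abs_lt_of_dilate_ne {e : ℝ → ℝ} (he : ∀ x ∉ Ioo (-1 : ℝ) 1, e x = x) {s y : ℝ}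
    (h : dilate e s y ≠ y) : |y| < s := by
  rcases lt_or_ge 0 s with hs | hs
  · by_contra hy
    have : y / s ∉ Ioo (-1 : ℝ) 1 := by
      rwa [mem_Ioo, ← abs_lt, abs_div, abs_of_pos hs, div_lt_one hs]
    exact h (by rw [dilate_of_pos e hs, he _ this, mul_div_cancel₀ _ hs.ne'])
  · exact absurd (dilate_of_nonpos e hs y) h

theorem abs_dilate_sub_le {e : ℝ → ℝ} {C : ℝ} (hb : ∀ x, |e x - x| ≤ C) (s y : ℝ) :
    |dilate e s y - y| ≤ C * |s| := by
  have hC : 0 ≤ C := (abs_nonneg _).trans (hb 0)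
  rcases lt_or_ge 0 s with hs | hs
  · calc |dilate e s y - y| = |s| * |e (y / s) - y / s| := by
          rw [dilate_of_pos e hs, ← abs_mul, mul_sub, mul_div_cancel₀ _ hs.ne']
      _ ≤ C * |s| := by rw [mul_comm]; exact mul_le_mul_of_nonneg_right (hb _) (abs_nonneg s)
  · rw [dilate_of_nonpos e hs, sub_self, abs_zero]
    positivity

theorem continuous_dilate {e : ℝ → ℝ} (he : Continuous e) {C : ℝ} (hb : ∀ x, |e x - x| ≤ C) :
    Continuous (uncurry (dilate e)) := by
  refine continuous_iff_continuousAt.2 fun ⟨s₀, y₀⟩ => ?_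
  rcases lt_trichotomy s₀ 0 with hs | rfl | hs
  · refine continuousAt_snd.congr ?_
    filter_upwards [continuousAt_fst.eventually (gt_mem_nhds hs)] with p hp
    exact (dilate_of_nonpos e hp.le p.2).symm
  · rw [ContinuousAt, uncurry_apply_pair, dilate_of_nonpos e le_rfl,
      tendsto_iff_dist_tendsto_zero]
    refine squeeze_zero (fun _ => dist_nonneg) (g := fun p => C * |p.1| + dist p.2 y₀)
      (fun p => (dist_triangle _ p.2 _).trans
        (add_le_add_left (abs_dilate_sub_le hb _ _) _)) ?_
    have : Continuous fun p : ℝ × ℝ => C * |p.1| + dist p.2 y₀ := by fun_prop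
    simpa using this.tendsto (0, y₀)
  · have : ContinuousAt (fun p : ℝ × ℝ => p.1 * e (p.2 / p.1)) (s₀, y₀) :=
      continuousAt_fst.mul (he.continuousAt.comp (continuousAt_snd.div continuousAt_fst hs.ne'))
    refine this.congr ?_
    filter_upwards [continuousAt_fst.eventually (lt_mem_nhds hs)] with p hp
    exact (dilate_of_pos e hp p.2).symm

section Isotopy

variable {X Y : Type*} [TopologicalSpace X] [TopologicalSpace Y]

theorem mem_Homeo0_of_isotopy {f : X ≃ₜ X} (u v : X × unitInterval → X)
    (hu : Continuous u) (hv : Continuous v)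
    (hvu : ∀ p, v (u p, p.2) = p.1) (huv : ∀ p, u (v p, p.2) = p.1)
    (h0 : ∀ x, u (x, 0) = x) (h1 : ∀ x, u (x, 1) = f x)
    {K : Set X} (hK : IsCompact K) (hKu : ∀ t, ∀ x ∉ K, u (x, t) = x) : f ∈ Homeo0 X :=
  ⟨{ toFun p := (u p, p.2)
     invFun p := (v p, p.2)
     left_inv p := Prod.ext (hvu p) rfl
     right_inv p := Prod.ext (huv p) rfl
     continuous_toFun := hu.prodMk continuous_snd
     continuous_invFun := hv.prodMk continuous_snd },
    K, hK, fun _ => rfl, fun x => Prod.ext (h0 x) rfl, fun x => Prod.ext (h1 x) rfl,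
    fun t x hx => Prod.ext (hKu t x hx) rfl⟩

theorem conj_mem_Homeo0 (ψ : X ≃ₜ Y) {f : X ≃ₜ X} (hf : f ∈ Homeo0 X) :
    (ψ.symm.trans f).trans ψ ∈ Homeo0 Y := by
  obtain ⟨H, K, hK, hlevel, h0, h1, hK'⟩ := hf
  let ψI := ψ.prodCongr (Homeomorph.refl unitInterval)
  refine ⟨(ψI.symm.trans H).trans ψI, ψ '' K, hK.image ψ.continuous, fun p => ?_, fun y => ?_,
    fun y => ?_, fun t y hy => ?_⟩
  · simp [ψI, hlevel]
  · simp [ψI, h0]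
  · simp [ψI, h1]
  · have : ψ.symm y ∉ K := fun h => hy ⟨_, h, ψ.apply_symm_apply y⟩
    simp [ψI, hK' t _ this]

def homeo0Congr (ψ : X ≃ₜ Y) : Homeo0 X ≃* Homeo0 Y where
  toFun f := ⟨(ψ.symm.trans f).trans ψ, conj_mem_Homeo0 ψ f.2⟩
  invFun g := ⟨(ψ.trans g).trans ψ.symm, conj_mem_Homeo0 ψ.symm g.2⟩
  left_inv f := by ext; simp
  right_inv g := by ext; simp
  map_mul' f g := by ext; simp

end Isotopy

section Slide

open Metric

variable {F : Type*} [PseudoMetricSpace F] (z₀ : F) (δ : ℝ)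

def slide (e : ℝ → ℝ) (t : ℝ) (p : ℝ × F) : ℝ × F :=
  (dilate e (t * (δ - dist p.2 z₀)) p.1, p.2)

theorem slide_comp (e e' : ℝ → ℝ) (t : ℝ) :
    slide z₀ δ (e ∘ e') t = slide z₀ δ e t ∘ slide z₀ δ e' t := by
  funext p
  simp [slide, dilate_comp]

theorem slide_id (t : ℝ) : slide z₀ δ id t = id := by
  funext p
  simp [slide, dilate_id]

theorem slide_zero (e : ℝ → ℝ) : slide z₀ δ e 0 = id := by
  funext p
  simp [slide, dilate_of_nonpos]

variable {z₀ δ} in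
theorem mem_ball_of_slide_ne {e : ℝ → ℝ} (he : ∀ x ∉ Ioo (-1 : ℝ) 1, e x = x) {t : ℝ}
    (ht : t ∈ Icc (0 : ℝ) 1) {p : ℝ × F} (h : slide z₀ δ e t p ≠ p) : p ∈ ball (0, z₀) δ := by
  have hy : |p.1| < t * (δ - dist p.2 z₀) :=
    abs_lt_of_dilate_ne he fun h' => h (Prod.ext h' rfl)
  have hd : 0 < δ - dist p.2 z₀ := pos_of_mul_pos_right ((abs_nonneg _).trans_lt hy) ht.1
  have : t * (δ - dist p.2 z₀) ≤ δ - dist p.2 z₀ := mul_le_of_le_one_left hd.le ht.2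
  rw [mem_ball, Prod.dist_eq, max_lt_iff, Real.dist_0_eq_abs]
  constructor <;> linarith [dist_nonneg (x := p.2) (y := z₀)]

theorem continuous_slide {e : ℝ → ℝ} (he : Continuous e) {C : ℝ} (hb : ∀ x, |e x - x| ≤ C) :
    Continuous fun q : (ℝ × F) × ℝ => slide z₀ δ e q.2 q.1 := by
  refine Continuous.prodMk ((continuous_dilate he hb).comp (f := fun q : (ℝ × F) × ℝ =>
    (q.2 * (δ - dist q.1.2 z₀), q.1.1)) (by fun_prop)) (by fun_prop)

theorem continuous_slide_compress {g : ℝ ≃ₜ ℝ} (hg : g ∈ homeoPlus) :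
    Continuous fun q : (ℝ × F) × ℝ => slide z₀ δ (compress g) q.2 q.1 :=
  continuous_slide z₀ δ (continuous_compress hg g.surjective) (abs_compress_sub_le g)

theorem slide_compress_symm_slide_compress (g : ℝ ≃ₜ ℝ) (t : ℝ) (p : ℝ × F) :
    slide z₀ δ (compress g.symm) t (slide z₀ δ (compress g) t p) = p := by
  rw [← comp_apply (f := slide z₀ δ _ t), ← slide_comp, ← compress_comp, g.symm_comp_self,
    compress_id, slide_id, id]

def slideHomeomorph (f : homeoPlus) : (ℝ × F) ≃ₜ (ℝ × F) where
  toFun := slide z₀ δ (compress f) 1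
  invFun := slide z₀ δ (compress (f : ℝ ≃ₜ ℝ).symm) 1
  left_inv := slide_compress_symm_slide_compress z₀ δ f 1
  right_inv p := by simpa using slide_compress_symm_slide_compress z₀ δ (f : ℝ ≃ₜ ℝ).symm 1 p
  continuous_toFun := (continuous_slide_compress z₀ δ f.2).comp
    (continuous_id.prodMk continuous_const)
  continuous_invFun := (continuous_slide_compress z₀ δ (inv_mem f.2)).comp
    (continuous_id.prodMk continuous_const)

variable [ProperSpace F]

theorem slideHomeomorph_mem_Homeo0 (f : homeoPlus) :
    slideHomeomorph z₀ δ f ∈ Homeo0 (ℝ × F) := by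
  have htime : Continuous fun q : (ℝ × F) × unitInterval => (q.1, (q.2 : ℝ)) := by fun_prop
  refine mem_Homeo0_of_isotopy (fun q => slide z₀ δ (compress f) q.2 q.1)
    (fun q => slide z₀ δ (compress (f : ℝ ≃ₜ ℝ).symm) q.2 q.1)
    ((continuous_slide_compress z₀ δ f.2).comp htime)
    ((continuous_slide_compress z₀ δ (inv_mem f.2)).comp htime)
    (fun q => slide_compress_symm_slide_compress z₀ δ f q.2 q.1)
    (fun q => by
      simpa using slide_compress_symm_slide_compress z₀ δ (f : ℝ ≃ₜ ℝ).symm q.2 q.1)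
    (fun p => by simp [slide_zero]) (fun p => rfl) (isCompact_closedBall (0, z₀) δ)
    fun t p hp => ?_
  by_contra h
  exact hp (ball_subset_closedBall (mem_ball_of_slide_ne (fun _ => compress_of_notMem f) t.2 h))

def slideHom : homeoPlus →* Homeo0 (ℝ × F) :=
  MonoidHom.mk' (fun f => ⟨slideHomeomorph z₀ δ f, slideHomeomorph_mem_Homeo0 z₀ δ f⟩)
    fun f g => by
      refine Subtype.ext (Homeomorph.ext fun p => ?_)
      show slide z₀ δ (compress (⇑(f : ℝ ≃ₜ ℝ) ∘ ⇑(g : ℝ ≃ₜ ℝ))) 1 p =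
        slide z₀ δ (compress f) 1 (slide z₀ δ (compress g) 1 p)
      rw [compress_comp, slide_comp]
      rfl

theorem slideHom_apply (f : homeoPlus) (p : ℝ × F) :
    (slideHom z₀ δ f : (ℝ × F) ≃ₜ (ℝ × F)) p = slide z₀ δ (compress f) 1 p :=
  rfl

theorem slideHom_apply_of_notMem_ball (f : homeoPlus) {p : ℝ × F} (hp : p ∉ ball (0, z₀) δ) :
    (slideHom z₀ δ f : (ℝ × F) ≃ₜ (ℝ × F)) p = p := by
  by_contra h
  exact hp (mem_ball_of_slide_ne (fun _ => compress_of_notMem f) ⟨zero_le_one, le_rfl⟩ h)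

variable {δ} in
theorem slideHom_injective (hδ : 0 < δ) : Injective (slideHom (F := F) z₀ δ) := by
  intro f g hfg
  have hcenter : ∀ (f : homeoPlus) (x : ℝ),
      ((slideHom z₀ δ f : (ℝ × F) ≃ₜ (ℝ × F)) (δ * x, z₀)).1 = δ * compress f x := by
    intro f x
    simp [slideHom_apply, slide, dilate_of_pos _ hδ, hδ.ne']
  have : compress f = compress g :=
    funext fun x => mul_left_cancel₀ hδ.ne' (by rw [← hcenter, ← hcenter, hfg])
  exact Subtype.ext (Homeomorph.ext (congrFun (compress_injective this)))

end Slide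

end

/-- For any nonempty open subset `U` of `ℝ^d` there is a subgroup of `Homeo₀(ℝ^d)`
abstractly isomorphic to `Homeo_ℤ(ℝ)` all of whose elements are supported in `U`. -/
theorem stmt_12 {d : ℕ} (hd : 1 ≤ d)
    (U : Set (EuclideanSpace ℝ (Fin d))) (hU : IsOpen U) (hUne : U.Nonempty) :
    ∃ G : Subgroup (Homeo0 (EuclideanSpace ℝ (Fin d))), Nonempty (G ≃* HomeoZ) ∧
      ∀ f ∈ G, ∀ x ∉ U,
        (f : EuclideanSpace ℝ (Fin d) ≃ₜ EuclideanSpace ℝ (Fin d)) x = x := by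
  obtain ⟨n, rfl⟩ : ∃ n, d = n + 1 := ⟨d - 1, by omega⟩
  obtain ⟨c, hc⟩ := hUne
  let ψ : ℝ × (Fin n → ℝ) ≃ₜ EuclideanSpace ℝ (Fin (n + 1)) :=
    ((Fin.consEquivL ℝ fun _ => ℝ).trans
      (EuclideanSpace.equiv (Fin (n + 1)) ℝ).symm).toHomeomorph.trans (Homeomorph.addRight c)
  have hψ : ψ (0, 0) = c := by simp [ψ]
  obtain ⟨δ, hδ, hball⟩ :=
    Metric.isOpen_iff.1 (hU.preimage ψ.continuous) (0, 0) (by rwa [mem_preimage, hψ])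
  let Φ := ((homeo0Congr ψ).toMonoidHom.comp (slideHom 0 δ)).comp
    (Subgroup.inclusion HomeoZ_le_homeoPlus)
  have hΦ : Injective Φ := ((homeo0Congr ψ).injective.comp (slideHom_injective 0 hδ)).comp
    (Subgroup.inclusion_injective _)
  refine ⟨Φ.range, ⟨(MonoidHom.ofInjective hΦ).symm⟩, ?_⟩
  rintro _ ⟨f, rfl⟩ x hx
  have : ψ.symm x ∉ Metric.ball (0, 0) δ := fun h => hx (by simpa using hball h)
  simp [Φ, homeo0Congr, slideHom_apply_of_notMem_ball _ _ _ this]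
end

section
/- Every group homomorphism from Homeo_ℤ(ℝ) to ℤ is trivial. Equivalently, every element of Homeo_ℤ(ℝ) is a product of commutators of elements of Homeo_ℤ(ℝ). -/
/-!
An element `g` with a fixed point is a commutator. Conjugating by a translation, `g` fixes `0`,
hence `ℤ`. Take `u` fixing `ℤ` with `u > max g id` on `(0, 1)`; then `u⁻¹` and `u⁻¹ g` fix `ℤ`
and push every point of `(0, 1)` down. Any two such maps are conjugate, by matching their
fundamental domains `[γ (1/2), 1/2)` with an affine map and transporting along the orbits; so
`u⁻¹ g = c u⁻¹ c⁻¹` and `g = ⁅u, c⁆`.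

A translation by `s` with `|s| ≤ 1/4` is `a b`, where the bump `b` fixes `0` and sends `1/2` to
`1/2 + s`, so that `a` fixes `1/2 + s`. Every translation is a power of such a one, and every
element is a translation times an element fixing `0`.
-/

open Function Set Filter Topology Real
open scoped commutatorElement

theorem map_add_intCast_of_map_add_one {F : ℝ → ℝ} (h : ∀ x, F (x + 1) = F x + 1)
    (x : ℝ) (k : ℤ) : F (x + k) = F x + k := by
  induction k using Int.induction_on with
  | zero => simp
  | succ n ih => push_cast at ih ⊢; rw [← add_assoc, h, ih, add_assoc]
  | pred n ih =>
    have := h (x + (-n - 1 : ℤ))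
    push_cast at this ih ⊢
    rw [show x + (-n - 1) + 1 = x + -n by ring, ih] at this
    linarith

theorem surjective_of_continuous_of_map_add_one {F : ℝ → ℝ} (hF : Continuous F)
    (h : ∀ x, F (x + 1) = F x + 1) : Surjective F := by
  intro y
  set k := ⌊y - F 0⌋
  have hk : F k = F 0 + k := by simpa using map_add_intCast_of_map_add_one h 0 k
  have hk₁ : (k : ℝ) ≤ y - F 0 := Int.floor_le _
  have hk₂ : y - F 0 < k + 1 := Int.lt_floor_add_one _
  obtain ⟨x, -, hx⟩ := intermediate_value_Icc (by linarith : (k : ℝ) ≤ k + 1) hF.continuousOn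
    (⟨by linarith, by rw [h]; linarith⟩ : y ∈ Icc (F k) (F (k + 1)))
  exact ⟨x, hx⟩

theorem exists_orderIso_apply_eq {a b c d : ℝ} (hab : a < b) (hcd : c < d) :
    ∃ ℓ : ℝ ≃o ℝ, ℓ a = c ∧ ℓ b = d := by
  have hr : 0 < (d - c) / (b - a) := div_pos (sub_pos.2 hcd) (sub_pos.2 hab)
  refine ⟨((OrderIso.addRight (-a)).trans (OrderIso.mulLeft₀ _ hr)).trans (OrderIso.addRight c),
    by simp, ?_⟩
  simp only [OrderIso.trans_apply, OrderIso.addRight_apply, OrderIso.mulLeft₀_apply]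
  field_simp [(sub_pos.2 hab).ne']
  ring

section UpdateIco

variable {α : Type*} [LinearOrder α] {φ : α → α} {a b : α}

theorem mapsTo_update_Ico (h : MapsTo φ (Ioo a b) (Ioo a b)) :
    MapsTo (update φ a a) (Ico a b) (Ico a b) := by
  intro x hx
  rcases eq_or_lt_of_le hx.1 with rfl | hax
  · simpa using hx
  · rw [update_of_ne hax.ne']
    exact Ioo_subset_Ico_self (h ⟨hax, hx.2⟩)

theorem strictMonoOn_update_Ico (hmaps : MapsTo φ (Ioo a b) (Ioo a b))
    (hmono : StrictMonoOn φ (Ioo a b)) : StrictMonoOn (update φ a a) (Ico a b) := by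
  intro x hx y hy hxy
  have hay : a < y := hx.1.trans_lt hxy
  rw [update_of_ne hay.ne']
  rcases eq_or_lt_of_le hx.1 with rfl | hax
  · simpa using (hmaps ⟨hay, hy.2⟩).1
  · rw [update_of_ne hax.ne']
    exact hmono ⟨hax, hx.2⟩ ⟨hay, hy.2⟩ hxy

theorem surjOn_update_Ico (h : SurjOn φ (Ioo a b) (Ioo a b)) :
    SurjOn (update φ a a) (Ico a b) (Ico a b) := by
  intro w hw
  rcases eq_or_lt_of_le hw.1 with rfl | haw
  · exact ⟨a, hw, by simp⟩
  · obtain ⟨x, hx, rfl⟩ := h ⟨haw, hw.2⟩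
    exact ⟨x, Ioo_subset_Ico_self hx, update_of_ne hx.1.ne' _ _⟩

end UpdateIco

section PeriodicExt

noncomputable def periodicExt (φ : ℝ → ℝ) (x : ℝ) : ℝ := φ (Int.fract x) + ⌊x⌋

variable {φ ψ : ℝ → ℝ}

theorem Int.fract_mem_Ico {R : Type*} [Ring R] [LinearOrder R] [IsStrictOrderedRing R]
    [FloorRing R] (x : R) : Int.fract x ∈ Ico (0 : R) 1 :=
  ⟨Int.fract_nonneg x, Int.fract_lt_one x⟩

theorem periodicExt_add_intCast {y : ℝ} (hy : y ∈ Ico (0 : ℝ) 1) (k : ℤ) :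
    periodicExt φ (y + k) = φ y + k := by
  rw [periodicExt, Int.fract_add_intCast, Int.floor_add_intCast, Int.fract_eq_self.2 hy,
    Int.floor_eq_zero_iff.2 hy, zero_add]

theorem periodicExt_add_one (x : ℝ) : periodicExt φ (x + 1) = periodicExt φ x + 1 := by
  rw [periodicExt, periodicExt, Int.fract_add_one, Int.floor_add_one]
  push_cast
  ring

theorem periodicExt_eq_self (h : ∀ x, φ (x + 1) = φ x + 1) : periodicExt φ = φ := by
  ext x
  conv_rhs => rw [← Int.fract_add_floor x, map_add_intCast_of_map_add_one h]
  rfl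

theorem periodicExt_congr (h : EqOn φ ψ (Ico 0 1)) : periodicExt φ = periodicExt ψ := by
  ext x
  rw [periodicExt, periodicExt, h (Int.fract_mem_Ico x)]

theorem periodicExt_comp (hψ : MapsTo ψ (Ico 0 1) (Ico 0 1)) :
    periodicExt (φ ∘ ψ) = periodicExt φ ∘ periodicExt ψ := by
  ext x
  change _ = periodicExt φ (ψ (Int.fract x) + ⌊x⌋)
  rw [periodicExt_add_intCast (hψ (Int.fract_mem_Ico x))]
  rfl

theorem strictMono_periodicExt (hmaps : MapsTo φ (Ico 0 1) (Ico 0 1))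
    (hmono : StrictMonoOn φ (Ico 0 1)) : StrictMono (periodicExt φ) := by
  intro x y hxy
  have hx := hmaps (Int.fract_mem_Ico x)
  have hy := hmaps (Int.fract_mem_Ico y)
  rcases (Int.floor_mono hxy.le).lt_or_eq with hlt | heq
  · have : (⌊x⌋ : ℝ) + 1 ≤ ⌊y⌋ := by exact_mod_cast hlt
    simp only [periodicExt]
    linarith [hx.2, hy.1]
  · have : Int.fract x < Int.fract y := by
      rw [← Int.self_sub_floor, ← Int.self_sub_floor, heq]
      linarith
    simp only [periodicExt, heq]
    linarith [hmono (Int.fract_mem_Ico x) (Int.fract_mem_Ico y) this]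

theorem surjective_periodicExt (h : SurjOn φ (Ico 0 1) (Ico 0 1)) :
    Surjective (periodicExt φ) := by
  intro w
  obtain ⟨y, hy, hyw⟩ := h (Int.fract_mem_Ico w)
  exact ⟨y + ⌊w⌋, by rw [periodicExt_add_intCast hy, hyw, Int.fract_add_floor]⟩

end PeriodicExt

namespace HomeoZ

instance : CoeFun HomeoZ fun _ => ℝ → ℝ := ⟨fun f => (f : ℝ ≃ₜ ℝ)⟩

variable (f g : HomeoZ) (x : ℝ)

@[simp] theorem mul_apply : (f * g) x = f (g x) := rfl

@[simp] theorem one_apply : (1 : HomeoZ) x = x := rfl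

@[simp] theorem inv_apply_self : f⁻¹ (f x) = x := (f : ℝ ≃ₜ ℝ).symm_apply_apply x

@[simp] theorem apply_inv_self : f (f⁻¹ x) = x := (f : ℝ ≃ₜ ℝ).apply_symm_apply x

theorem map_add_one : f (x + 1) = f x + 1 := f.2 x

protected theorem continuous : Continuous f := (f : ℝ ≃ₜ ℝ).continuous

protected theorem strictMono : StrictMono f := by
  refine ((HomeoZ.continuous f).strictMono_of_inj (f : ℝ ≃ₜ ℝ).injective).resolve_right
    fun hanti => ?_
  have := hanti (lt_add_one 0)
  rw [map_add_one] at this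
  linarith

variable {f g}

@[ext] theorem ext (h : ∀ x, f x = g x) : f = g := Subtype.ext (Homeomorph.ext h)

theorem zpow_add_one_apply (n : ℤ) : (f ^ (n + 1)) x = f ((f ^ n) x) := by
  rw [add_comm, zpow_one_add]
  rfl

theorem pow_apply_eq_iterate (n : ℕ) : (f ^ n) x = f^[n] x := by
  induction n generalizing x with
  | zero => rfl
  | succ n ih => rw [pow_succ, mul_apply, ih, iterate_succ_apply]

theorem zpow_apply_eq_self (h : f x = x) (n : ℤ) : (f ^ n) x = x := by
  induction n using Int.induction_on with
  | zero => rfl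
  | succ n ih => rw [zpow_add_one_apply, ih, h]
  | pred n ih =>
    have h' : f⁻¹ x = x := by conv_lhs => rw [← h, inv_apply_self]
    rw [zpow_sub_one, mul_apply, h', ih]

theorem mapsTo_Ioo_of_map_zero (h : f 0 = 0) : MapsTo f (Ioo 0 1) (Ioo 0 1) := by
  have h1 : f 1 = 1 := by simpa [h] using map_add_one f 0
  exact fun y hy => ⟨h ▸ HomeoZ.strictMono f hy.1, h1 ▸ HomeoZ.strictMono f hy.2⟩

theorem mapsTo_Ico_of_map_zero (h : f 0 = 0) : MapsTo f (Ico 0 1) (Ico 0 1) := by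
  intro y hy
  rcases eq_or_lt_of_le hy.1 with rfl | hy₀
  · simp [h]
  · exact Ioo_subset_Ico_self (mapsTo_Ioo_of_map_zero h ⟨hy₀, hy.2⟩)

-- Continuity comes for free: a strictly monotone surjection of `ℝ` is an order isomorphism.
noncomputable def ofStrictMono (F : ℝ → ℝ) (hmono : StrictMono F) (hsurj : Surjective F)
    (h : ∀ x, F (x + 1) = F x + 1) : HomeoZ :=
  ⟨(hmono.orderIsoOfSurjective F hsurj).toHomeomorph, h⟩

noncomputable def translate (c : ℝ) : HomeoZ :=
  ofStrictMono (· + c) (strictMono_id.add_const c) (fun y => ⟨y - c, sub_add_cancel y c⟩)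
    fun x => add_right_comm x 1 c

@[simp] theorem translate_apply (c : ℝ) : translate c x = x + c := rfl

theorem translate_inv (c : ℝ) : (translate c)⁻¹ = translate (-c) :=
  inv_eq_of_mul_eq_one_right (by ext; simp)

theorem translate_pow (c : ℝ) (n : ℕ) : translate c ^ n = translate (n * c) := by
  induction n with
  | zero => ext; simp
  | succ n ih =>
    ext
    rw [pow_succ, mul_apply, ih, translate_apply, translate_apply, translate_apply]
    push_cast
    ring

noncomputable def supId (g : HomeoZ) : HomeoZ :=
  ofStrictMono (fun x => max (g x) x) (fun _ _ h => max_lt_max (HomeoZ.strictMono g h) h)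
    (surjective_of_continuous_of_map_add_one ((HomeoZ.continuous g).max continuous_id) fun x => by
      rw [map_add_one, max_add_add_right])
    fun x => by rw [map_add_one, max_add_add_right]

@[simp] theorem supId_apply : supId g x = max (g x) x := rfl

theorem strictMono_add_bump {s : ℝ} (hs : |s| ≤ 1 / 4) :
    StrictMono fun x => x + s * (1 - cos (2 * π * x)) / 2 := by
  intro x y hxy
  have hcos : |cos (2 * π * x) - cos (2 * π * y)| ≤ 2 * π * (y - x) := by
    simpa [← mul_sub, abs_mul, abs_of_pos pi_pos, abs_sub_comm x y, abs_of_pos (sub_pos.2 hxy)]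
      using abs_cos_sub_cos_le (2 * π * x) (2 * π * y)
  have hprod : |s * (cos (2 * π * x) - cos (2 * π * y))| ≤ 1 / 4 * (2 * π * (y - x)) := by
    rw [abs_mul]
    exact mul_le_mul hs hcos (abs_nonneg _) (by norm_num)
  have := neg_abs_le (s * (cos (2 * π * x) - cos (2 * π * y)))
  nlinarith [pi_lt_four]

noncomputable def bump (s : ℝ) (hs : |s| ≤ 1 / 4) : HomeoZ :=
  have h : ∀ x, x + 1 + s * (1 - cos (2 * π * (x + 1))) / 2 =
      x + s * (1 - cos (2 * π * x)) / 2 + 1 := fun x => by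
    rw [mul_add, mul_one, cos_add_two_pi]
    ring
  ofStrictMono _ (strictMono_add_bump hs)
    (surjective_of_continuous_of_map_add_one (by fun_prop) h) h

variable {s : ℝ} (hs : |s| ≤ 1 / 4)

theorem bump_apply : bump s hs x = x + s * (1 - cos (2 * π * x)) / 2 := rfl

@[simp] theorem bump_apply_zero : bump s hs 0 = 0 := by simp [bump_apply]

theorem bump_apply_half : bump s hs (1 / 2) = 1 / 2 + s := by
  rw [bump_apply, show 2 * π * (1 / 2) = π by ring, cos_pi]
  ring

theorem lt_bump_apply (hs₀ : 0 < s) {x : ℝ} (hx : x ∈ Ioo (0 : ℝ) 1) : x < bump s hs x := by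
  have hcos : cos (2 * π * x) < 1 := by
    refine (cos_le_one _).lt_of_ne fun h => ?_
    have := (cos_eq_one_iff_of_lt_of_lt (by nlinarith [pi_pos, hx.1])
      (by nlinarith [pi_pos, hx.2])).1 h
    nlinarith [pi_pos, hx.1]
  rw [bump_apply]
  nlinarith

def MovesDown (γ : HomeoZ) : Prop := γ 0 = 0 ∧ ∀ x ∈ Ioo (0 : ℝ) 1, γ x < x

def fundDomain (γ : HomeoZ) : Set ℝ := Ico (γ (1 / 2)) (1 / 2)

-- Only meaningful for `x ∈ (0, 1)` and `MovesDown γ`, where such an `n` exists and is unique.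
noncomputable def fundIndex (γ : HomeoZ) (x : ℝ) : ℤ :=
  Classical.epsilon fun n : ℤ => (γ ^ n) x ∈ fundDomain γ

namespace MovesDown

variable {γ : HomeoZ} {x : ℝ}

theorem zpow_apply_mem (hγ : MovesDown γ) (hx : x ∈ Ioo (0 : ℝ) 1) (n : ℤ) :
    (γ ^ n) x ∈ Ioo (0 : ℝ) 1 :=
  mapsTo_Ioo_of_map_zero (zpow_apply_eq_self 0 hγ.1 n) hx

theorem strictAnti_zpow_apply (hγ : MovesDown γ) (hx : x ∈ Ioo (0 : ℝ) 1) :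
    StrictAnti fun n : ℤ => (γ ^ n) x :=
  strictAnti_int_of_succ_lt fun n => by
    rw [zpow_add_one_apply]
    exact hγ.2 _ (hγ.zpow_apply_mem hx n)

-- The orbit decreases, and a positive limit would be a fixed point of `γ` in `(0, 1)`.
theorem exists_pow_apply_lt (hγ : MovesDown γ) (hx : x ∈ Ioo (0 : ℝ) 1) {c : ℝ} (hc : 0 < c) :
    ∃ n : ℕ, (γ ^ n) x < c := by
  by_contra! hle
  have hanti : Antitone fun n : ℕ => γ^[n] x := fun m n hmn => by
    simpa only [zpow_natCast, pow_apply_eq_iterate] using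
      (hγ.strictAnti_zpow_apply hx).antitone (Nat.cast_le.2 hmn)
  have hbdd : BddBelow (range fun n : ℕ => γ^[n] x) :=
    ⟨c, forall_mem_range.2 fun n => pow_apply_eq_iterate x n ▸ hle n⟩
  set L := ⨅ n : ℕ, γ^[n] x
  have hfix : γ L = L :=
    isFixedPt_of_tendsto_iterate (tendsto_atTop_ciInf hanti hbdd) (HomeoZ.continuous γ).continuousAt
  have hcL : c ≤ L := le_ciInf fun n => pow_apply_eq_iterate x n ▸ hle n
  have hLx : L ≤ x := ciInf_le hbdd 0
  exact (hγ.2 L ⟨hc.trans_le hcL, hLx.trans_lt hx.2⟩).ne hfix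

theorem fundDomain_subset (hγ : MovesDown γ) : fundDomain γ ⊆ Ioo 0 1 := fun _ hy =>
  ⟨(mapsTo_Ioo_of_map_zero hγ.1 (by norm_num : (1 / 2 : ℝ) ∈ Ioo 0 1)).1.trans_le hy.1,
    hy.2.trans (by norm_num)⟩

theorem exists_zpow_apply_mem_fundDomain (hγ : MovesDown γ) (hx : x ∈ Ioo (0 : ℝ) 1) :
    ∃ n : ℤ, (γ ^ n) x ∈ fundDomain γ := by
  obtain ⟨k, hk⟩ := hγ.exists_pow_apply_lt hx one_half_pos
  obtain ⟨j, hj⟩ := hγ.exists_pow_apply_lt (by norm_num : (1 / 2 : ℝ) ∈ Ioo 0 1) hx.1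
  have hbdd : ∀ n : ℤ, (γ ^ n) x < 1 / 2 → -(j : ℤ) ≤ n := by
    intro n hn
    by_contra! hlt
    have h₁ : (γ ^ (-(j : ℤ))) x < (γ ^ n) x := hγ.strictAnti_zpow_apply hx hlt
    have h₂ := HomeoZ.strictMono (γ ^ (-(j : ℤ))) hj
    rw [← mul_apply, ← zpow_natCast, ← zpow_add, neg_add_cancel, zpow_zero, one_apply] at h₂
    linarith
  obtain ⟨N, hN, hmin⟩ := Int.exists_least_of_bdd ⟨_, hbdd⟩ ⟨k, by simpa using hk⟩
  refine ⟨N, ?_, hN⟩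
  have hprev : 1 / 2 ≤ (γ ^ (N - 1)) x := by
    by_contra! h
    linarith [hmin _ h]
  have := (HomeoZ.strictMono γ).monotone hprev
  rwa [← zpow_add_one_apply, sub_add_cancel] at this

theorem le_of_zpow_apply_mem_fundDomain (hγ : MovesDown γ) {y : ℝ} {m n : ℤ} (hxy : x ≤ y)
    (hx : (γ ^ m) x ∈ fundDomain γ) (hy : (γ ^ n) y ∈ fundDomain γ) : m ≤ n := by
  by_contra! hnm
  have hz := hγ.fundDomain_subset hy
  have h₁ : (γ ^ m) y = (γ ^ (m - n)) ((γ ^ n) y) := by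
    rw [← mul_apply, ← zpow_add, sub_add_cancel]
  have h₂ : (γ ^ (m - n)) ((γ ^ n) y) ≤ γ ((γ ^ n) y) := by
    simpa using (hγ.strictAnti_zpow_apply hz).antitone (by omega : (1 : ℤ) ≤ m - n)
  have h₃ : γ ((γ ^ n) y) < γ (1 / 2) := HomeoZ.strictMono γ hy.2
  have h₄ : (γ ^ m) x ≤ (γ ^ m) y := (HomeoZ.strictMono _).monotone hxy
  linarith [hx.1]

theorem zpow_fundIndex_mem (hγ : MovesDown γ) (hx : x ∈ Ioo (0 : ℝ) 1) :
    (γ ^ fundIndex γ x) x ∈ fundDomain γ :=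
  Classical.epsilon_spec (hγ.exists_zpow_apply_mem_fundDomain hx)

theorem fundIndex_eq (hγ : MovesDown γ) {n : ℤ} (h : (γ ^ n) x ∈ fundDomain γ) :
    fundIndex γ x = n :=
  have hspec : (γ ^ fundIndex γ x) x ∈ fundDomain γ :=
    Classical.epsilon_spec (p := fun n : ℤ => (γ ^ n) x ∈ fundDomain γ) ⟨n, h⟩
  le_antisymm (hγ.le_of_zpow_apply_mem_fundDomain le_rfl hspec h)
    (hγ.le_of_zpow_apply_mem_fundDomain le_rfl h hspec)

theorem apply_half_lt (hγ : MovesDown γ) : γ (1 / 2) < 1 / 2 :=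
  hγ.2 _ (by norm_num)

theorem exists_bijOn_fundDomain {α β : HomeoZ} (hα : MovesDown α) (hβ : MovesDown β) :
    ∃ ℓ : ℝ ≃o ℝ, BijOn ℓ (fundDomain α) (fundDomain β) := by
  obtain ⟨ℓ, hℓα, hℓp⟩ := exists_orderIso_apply_eq hα.apply_half_lt hβ.apply_half_lt
  refine ⟨ℓ, ?_⟩
  have himage := ℓ.image_Ico (α (1 / 2)) (1 / 2)
  rw [hℓα, hℓp] at himage
  rw [fundDomain, fundDomain, ← himage]
  exact ℓ.injective.injOn.bijOn_image

end MovesDown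

noncomputable def conjFun (α β : HomeoZ) (ℓ : ℝ ≃o ℝ) (x : ℝ) : ℝ :=
  (β ^ (-fundIndex α x)) (ℓ ((α ^ fundIndex α x) x))

section ConjFun

variable {α β : HomeoZ} {ℓ : ℝ ≃o ℝ} {x : ℝ}

theorem zpow_apply_conjFun_mem (hα : MovesDown α) (hℓ : MapsTo ℓ (fundDomain α) (fundDomain β))
    (hx : x ∈ Ioo (0 : ℝ) 1) : (β ^ fundIndex α x) (conjFun α β ℓ x) ∈ fundDomain β := by
  rw [conjFun, ← mul_apply, ← zpow_add, add_neg_cancel, zpow_zero, one_apply]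
  exact hℓ (hα.zpow_fundIndex_mem hx)

theorem mapsTo_conjFun (hα : MovesDown α) (hβ : MovesDown β)
    (hℓ : MapsTo ℓ (fundDomain α) (fundDomain β)) :
    MapsTo (conjFun α β ℓ) (Ioo 0 1) (Ioo 0 1) := fun _ hx =>
  hβ.zpow_apply_mem (hβ.fundDomain_subset (hℓ (hα.zpow_fundIndex_mem hx))) _

theorem conjFun_apply_left (hα : MovesDown α) (hx : x ∈ Ioo (0 : ℝ) 1) :
    conjFun α β ℓ (α x) = β (conjFun α β ℓ x) := by
  have hn : fundIndex α (α x) = fundIndex α x - 1 := by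
    refine hα.fundIndex_eq ?_
    rw [← mul_apply, ← zpow_add_one, sub_add_cancel]
    exact hα.zpow_fundIndex_mem hx
  rw [conjFun, conjFun, hn, ← mul_apply, ← zpow_add_one, sub_add_cancel,
    show -(fundIndex α x - 1) = 1 + -fundIndex α x by ring, zpow_one_add, mul_apply]

theorem strictMonoOn_conjFun (hα : MovesDown α) (hβ : MovesDown β)
    (hℓ : MapsTo ℓ (fundDomain α) (fundDomain β)) :
    StrictMonoOn (conjFun α β ℓ) (Ioo 0 1) := by
  intro x hx y hy hxy
  rcases (hα.le_of_zpow_apply_mem_fundDomain hxy.le (hα.zpow_fundIndex_mem hx)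
    (hα.zpow_fundIndex_mem hy)).eq_or_lt with heq | hlt
  · simp only [conjFun, heq]
    exact HomeoZ.strictMono _ (ℓ.strictMono (HomeoZ.strictMono _ hxy))
  · by_contra! hge
    have := hβ.le_of_zpow_apply_mem_fundDomain hge (zpow_apply_conjFun_mem hα hℓ hy)
      (zpow_apply_conjFun_mem hα hℓ hx)
    omega

theorem surjOn_conjFun (hα : MovesDown α) (hβ : MovesDown β)
    (hℓ : SurjOn ℓ (fundDomain α) (fundDomain β)) :
    SurjOn (conjFun α β ℓ) (Ioo 0 1) (Ioo 0 1) := by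
  intro w hw
  set m := fundIndex β w
  obtain ⟨t, ht, hℓt⟩ := hℓ (hβ.zpow_fundIndex_mem hw)
  have hαt : (α ^ m) ((α ^ (-m)) t) = t := by
    rw [← mul_apply, ← zpow_add, add_neg_cancel, zpow_zero, one_apply]
  refine ⟨(α ^ (-m)) t, hα.zpow_apply_mem (hα.fundDomain_subset ht) _, ?_⟩
  rw [conjFun, hα.fundIndex_eq (hαt.symm ▸ ht), hαt, hℓt, ← mul_apply, ← zpow_add,
    neg_add_cancel, zpow_zero, one_apply]

end ConjFun

theorem MovesDown.isConj {α β : HomeoZ} (hα : MovesDown α) (hβ : MovesDown β) : IsConj α β := by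
  obtain ⟨ℓ, hℓ⟩ := hα.exists_bijOn_fundDomain hβ
  set φ := update (conjFun α β ℓ) 0 0
  have hmaps : MapsTo φ (Ico 0 1) (Ico 0 1) := mapsTo_update_Ico (mapsTo_conjFun hα hβ hℓ.mapsTo)
  have hαmaps := mapsTo_Ico_of_map_zero hα.1
  have hconj : EqOn (φ ∘ α) (β ∘ φ) (Ico 0 1) := by
    intro x hx
    rcases eq_or_lt_of_le hx.1 with rfl | hx₀
    · simp [φ, hα.1, hβ.1]
    · have hx' : x ∈ Ioo (0 : ℝ) 1 := ⟨hx₀, hx.2⟩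
      simp only [comp_apply, φ, update_of_ne hx₀.ne',
        update_of_ne (mapsTo_Ioo_of_map_zero hα.1 hx').1.ne']
      exact conjFun_apply_left hα hx'
  let c := ofStrictMono (periodicExt φ)
    (strictMono_periodicExt hmaps
      (strictMonoOn_update_Ico (mapsTo_conjFun hα hβ hℓ.mapsTo)
        (strictMonoOn_conjFun hα hβ hℓ.mapsTo)))
    (surjective_periodicExt (surjOn_update_Ico (surjOn_conjFun hα hβ hℓ.surjOn)))
    periodicExt_add_one
  have hc : c * α = β * c := by
    ext x
    calc periodicExt φ (α x) = periodicExt φ (periodicExt α x) := by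
          rw [periodicExt_eq_self (map_add_one α)]
      _ = periodicExt (β ∘ φ) x := by
          rw [← periodicExt_congr hconj, periodicExt_comp hαmaps, comp_apply]
      _ = β (periodicExt φ x) := by
          rw [periodicExt_comp hmaps, comp_apply, periodicExt_eq_self (map_add_one β)]
  exact isConj_iff.2 ⟨c, by rw [hc, mul_inv_cancel_right]⟩

theorem movesDown_inv_of_lt {u : HomeoZ} (h₀ : u 0 = 0) (h : ∀ x ∈ Ioo (0 : ℝ) 1, x < u x) :
    MovesDown u⁻¹ := by
  have h₀' : u⁻¹ 0 = 0 := by conv_lhs => rw [← h₀, inv_apply_self]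
  refine ⟨h₀', fun x hx => ?_⟩
  have := h _ (mapsTo_Ioo_of_map_zero h₀' hx)
  rwa [apply_inv_self] at this

theorem exists_commutatorElement_eq_of_map_zero {g : HomeoZ} (hg : g 0 = 0) :
    ∃ u c : HomeoZ, ⁅u, c⁆ = g := by
  have hs : |(1 / 4 : ℝ)| ≤ 1 / 4 := by norm_num [abs_of_pos]
  have hτ : ∀ x ∈ Ioo (0 : ℝ) 1, x < bump (1 / 4) hs x := fun x hx =>
    lt_bump_apply hs (by norm_num) hx
  set u := supId g * bump (1 / 4) hs
  have hgu : ∀ x ∈ Ioo (0 : ℝ) 1, g x < u x := fun x hx =>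
    (HomeoZ.strictMono g (hτ x hx)).trans_le (le_max_left _ _)
  have hu : MovesDown u⁻¹ := movesDown_inv_of_lt (by simp [u, hg])
    fun x hx => (hτ x hx).trans_le (le_max_right _ _)
  have hv : MovesDown (u⁻¹ * g) := by
    refine ⟨by rw [mul_apply, hg, hu.1], fun x hx => ?_⟩
    have := HomeoZ.strictMono u⁻¹ (hgu x hx)
    rwa [inv_apply_self] at this
  obtain ⟨c, hc⟩ := isConj_iff.1 (hu.isConj hv)
  refine ⟨u, c, ?_⟩
  rw [commutatorElement_def]
  simp only [mul_assoc] at hc ⊢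
  rw [hc, mul_inv_cancel_left]

theorem mem_commutator_of_map_eq_self {g : HomeoZ} {x₀ : ℝ} (hg : g x₀ = x₀) :
    g ∈ commutator HomeoZ := by
  set h := translate x₀
  obtain ⟨u, c, huc⟩ := exists_commutatorElement_eq_of_map_zero (g := h⁻¹ * g * h) (by
    rw [mul_apply, mul_apply, translate_inv, translate_apply, translate_apply, zero_add, hg,
      add_neg_cancel])
  have hmem : h⁻¹ * g * h ∈ commutator HomeoZ :=
    huc ▸ Subgroup.commutator_mem_commutator (Subgroup.mem_top u) (Subgroup.mem_top c)
  simpa [mul_assoc] using (inferInstance : (commutator HomeoZ).Normal).conj_mem _ hmem h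

theorem translate_mem_commutator_of_abs_le {s : ℝ} (hs : |s| ≤ 1 / 4) :
    translate s ∈ commutator HomeoZ := by
  have ha : (translate s * (bump s hs)⁻¹) (1 / 2 + s) = 1 / 2 + s := by
    conv_lhs => rw [← bump_apply_half hs, mul_apply, inv_apply_self, translate_apply]
  simpa using mul_mem (mem_commutator_of_map_eq_self ha)
    (mem_commutator_of_map_eq_self (bump_apply_zero hs))

theorem translate_mem_commutator (c : ℝ) : translate c ∈ commutator HomeoZ := by
  set n := ⌈4 * |c|⌉₊ + 1
  have hn : (0 : ℝ) < n := by positivity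
  have hsmall : |c / n| ≤ 1 / 4 := by
    rw [abs_div, Nat.abs_cast, div_le_iff₀ hn]
    have := Nat.le_ceil (4 * |c|)
    push_cast [n]
    linarith
  have := pow_mem (translate_mem_commutator_of_abs_le hsmall) n
  rwa [translate_pow, mul_div_cancel₀ _ hn.ne'] at this

theorem commutator_eq_top : commutator HomeoZ = ⊤ := by
  refine eq_top_iff.2 fun f _ => ?_
  have h₀ : ((translate (f 0))⁻¹ * f) 0 = 0 := by
    rw [mul_apply, translate_inv, translate_apply, add_neg_cancel]
  simpa using mul_mem (translate_mem_commutator (f 0)) (mem_commutator_of_map_eq_self h₀)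

end HomeoZ

/-- Every group morphism `Homeo_ℤ(ℝ) → ℤ` is trivial; equivalently, every element of
`Homeo_ℤ(ℝ)` is a product of commutators (the commutator subgroup is everything). -/
theorem stmt_14 :
    (∀ φ : HomeoZ →* Multiplicative ℤ, ∀ f : HomeoZ, φ f = 1) ∧
      commutator HomeoZ = ⊤ :=
  ⟨fun φ f => Abelianization.commutator_subset_ker φ
    (HomeoZ.commutator_eq_top ▸ Subgroup.mem_top f), HomeoZ.commutator_eq_top⟩
end
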